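/- arXiv:1210.4798 — 5 statements merged into one kernel-verified Lean document; each statement's English description precedes it below -/
import Mathlib

section
/- The ratio T(n,1)/n! tends to 1 as n → ∞; equivalently, T(n,1) ≥ n!(1 - O(1/n)). -/
/-- The number of components of a permutation `π` of `{1,…,n}` (0-indexed as `Fin n`):
the number of indices `1 ≤ s ≤ n` such that `π` maps `{1,…,s}` to itself. -/
def numComponents {n : ℕ} (π : Equiv.Perm (Fin n)) : ℕ :=
  ((Finset.Icc 1 n).filter fun s => ∀ i : Fin n, (i : ℕ) < s → (π i : ℕ) < s).card

/-- `T n k` is the number of permutations of `{1,…,n}` with exactly `k` components. -/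
def T (n k : ℕ) : ℕ :=
  (Finset.univ.filter fun π : Equiv.Perm (Fin n) => numComponents π = k).card

open Finset
section Split
variable {n s : ℕ}

/-- restriction of a block-preserving permutation to the lower block -/
def lowMap (hs : s ≤ n) (π : Equiv.Perm (Fin n))
    (h : ∀ i : Fin n, (i : ℕ) < s → (π i : ℕ) < s) : Fin s → Fin s :=
  fun j => ⟨(π ⟨j, lt_of_lt_of_le j.2 hs⟩ : ℕ), h _ j.2⟩

lemma lowMap_inj (hs : s ≤ n) (π : Equiv.Perm (Fin n))
    (h : ∀ i : Fin n, (i : ℕ) < s → (π i : ℕ) < s) :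
    Function.Injective (lowMap hs π h) := by
  intro a b hab
  have hab' := congrArg Fin.val hab
  simp only [lowMap] at hab'
  have : π ⟨a, lt_of_lt_of_le a.2 hs⟩ = π ⟨b, lt_of_lt_of_le b.2 hs⟩ := Fin.ext hab'
  have := congrArg Fin.val (π.injective this)
  exact Fin.ext this

lemma hge (hs : s ≤ n) (π : Equiv.Perm (Fin n))
    (h : ∀ i : Fin n, (i : ℕ) < s → (π i : ℕ) < s) :
    ∀ i : Fin n, s ≤ (i : ℕ) → s ≤ (π i : ℕ) := by
  intro i hi
  by_contra hlt
  push_neg at hlt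
  obtain ⟨j, hj⟩ := Finite.injective_iff_surjective.mp (lowMap_inj hs π h) ⟨(π i : ℕ), hlt⟩
  have hj' := congrArg Fin.val hj
  simp only [lowMap] at hj'
  have : (⟨j, lt_of_lt_of_le j.2 hs⟩ : Fin n) = i := π.injective (Fin.ext hj')
  have : (j : ℕ) = (i : ℕ) := congrArg Fin.val this
  have := j.2
  omega

lemma hlt2 (j : Fin (n - s)) : s + (j : ℕ) < n := by have := j.2; omega

/-- restriction to the upper block, shifted down -/
def highMap (hs : s ≤ n) (π : Equiv.Perm (Fin n))
    (h : ∀ i : Fin n, (i : ℕ) < s → (π i : ℕ) < s) : Fin (n - s) → Fin (n - s) :=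
  fun j => ⟨(π ⟨s + j, hlt2 j⟩ : ℕ) - s, by
    have h1 : s ≤ (π ⟨s + j, hlt2 j⟩ : ℕ) := hge hs π h _ (by simp)
    have h2 := (π ⟨s + (j : ℕ), hlt2 j⟩).2
    omega⟩

lemma highMap_inj (hs : s ≤ n) (π : Equiv.Perm (Fin n))
    (h : ∀ i : Fin n, (i : ℕ) < s → (π i : ℕ) < s) :
    Function.Injective (highMap hs π h) := by
  intro a b hab
  have hab' := congrArg Fin.val hab
  simp only [highMap] at hab'
  have h1 : s ≤ (π ⟨s + a, hlt2 a⟩ : ℕ) := hge hs π h _ (by simp)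
  have h2 : s ≤ (π ⟨s + b, hlt2 b⟩ : ℕ) := hge hs π h _ (by simp)
  have : π ⟨s + a, hlt2 a⟩ = π ⟨s + b, hlt2 b⟩ := Fin.ext (by omega)
  have := congrArg Fin.val (π.injective this)
  simp only at this
  exact Fin.ext (by omega)

noncomputable def split (hs : s ≤ n)
    (π : {π : Equiv.Perm (Fin n) // ∀ i : Fin n, (i : ℕ) < s → (π i : ℕ) < s}) :
    Equiv.Perm (Fin s) × Equiv.Perm (Fin (n - s)) :=
  (Equiv.ofBijective _ (Finite.injective_iff_bijective.mp (lowMap_inj hs π.1 π.2)),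
   Equiv.ofBijective _ (Finite.injective_iff_bijective.mp (highMap_inj hs π.1 π.2)))

lemma split_inj (hs : s ≤ n) : Function.Injective (split (n := n) hs) := by
  rintro ⟨π₁, h₁⟩ ⟨π₂, h₂⟩ heq
  simp only [split, Prod.mk.injEq] at heq
  obtain ⟨hl, hh⟩ := heq
  refine Subtype.ext (Equiv.ext fun i => ?_)
  show π₁ i = π₂ i
  by_cases hi : (i : ℕ) < s
  · have h0 := congrArg (fun e : Equiv.Perm (Fin s) => ((e ⟨(i : ℕ), hi⟩ : Fin s) : ℕ)) hl
    simp only [Equiv.ofBijective_apply, lowMap] at h0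
    have hieq : (⟨(i : ℕ), lt_of_lt_of_le hi hs⟩ : Fin n) = i := Fin.ext rfl
    rw [hieq] at h0
    exact Fin.ext h0
  · push_neg at hi
    have hj : (i : ℕ) - s < n - s := by have := i.2; omega
    have h0 := congrArg (fun e : Equiv.Perm (Fin (n - s)) =>
      ((e ⟨(i : ℕ) - s, hj⟩ : Fin (n - s)) : ℕ)) hh
    simp only [Equiv.ofBijective_apply, highMap] at h0
    have hieq : (⟨s + ((i : ℕ) - s), hlt2 ⟨(i : ℕ) - s, hj⟩⟩ : Fin n) = i := Fin.ext (by
      show s + ((i : ℕ) - s) = (i : ℕ); omega)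
    rw [hieq] at h0
    have g1 : s ≤ (π₁ i : ℕ) := hge hs π₁ h₁ i hi
    have g2 : s ≤ (π₂ i : ℕ) := hge hs π₂ h₂ i hi
    exact Fin.ext (by omega)

lemma card_block (hs : s ≤ n) :
    (Finset.univ.filter fun π : Equiv.Perm (Fin n) =>
      ∀ i : Fin n, (i : ℕ) < s → (π i : ℕ) < s).card ≤
    s.factorial * (n - s).factorial := by
  classical
  rw [← Fintype.card_subtype]
  have c1 := Fintype.card_perm (α := Fin s)
  have c2 := Fintype.card_perm (α := Fin (n - s))
  rw [Fintype.card_fin] at c1 c2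
  rw [← c1, ← c2, ← Fintype.card_prod]
  exact Fintype.card_le_of_injective _ (split_inj hs)

end Split



lemma numComponents_pos {n : ℕ} (hn : 1 ≤ n) (π : Equiv.Perm (Fin n)) :
    1 ≤ numComponents π := by
  rw [numComponents]
  exact Finset.card_pos.mpr ⟨n, by simp [hn, Fin.is_lt]⟩

lemma decomp_exists {n : ℕ} (hn : 1 ≤ n) (π : Equiv.Perm (Fin n))
    (h : numComponents π ≠ 1) :
    ∃ s ∈ Finset.Ico 1 n, ∀ i : Fin n, (i : ℕ) < s → (π i : ℕ) < s := by
  have h1 := numComponents_pos hn π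
  have h2 : 2 ≤ numComponents π := by omega
  rw [numComponents] at h2
  obtain ⟨s, hs, t, ht, hst⟩ := Finset.one_lt_card.mp h2
  simp only [Finset.mem_filter, Finset.mem_Icc] at hs ht
  rcases eq_or_ne s n with rfl | hsn
  · exact ⟨t, Finset.mem_Ico.mpr ⟨ht.1.1, lt_of_le_of_ne ht.1.2 (Ne.symm hst)⟩, ht.2⟩
  · exact ⟨s, Finset.mem_Ico.mpr ⟨hs.1.1, lt_of_le_of_ne hs.1.2 hsn⟩, hs.2⟩

lemma D_le {n : ℕ} (hn : 1 ≤ n) :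
    (Finset.univ.filter fun π : Equiv.Perm (Fin n) => numComponents π ≠ 1).card ≤
    ∑ s ∈ Finset.Ico 1 n, s.factorial * (n - s).factorial := by
  classical
  calc (Finset.univ.filter fun π : Equiv.Perm (Fin n) => numComponents π ≠ 1).card
      ≤ ((Finset.Ico 1 n).biUnion fun s => Finset.univ.filter
          fun π : Equiv.Perm (Fin n) => ∀ i : Fin n, (i : ℕ) < s → (π i : ℕ) < s).card := by
        apply Finset.card_le_card
        intro π hπ
        simp only [Finset.mem_filter, Finset.mem_univ, true_and] at hπ
        obtain ⟨s, hs, hprop⟩ := decomp_exists hn π hπ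
        exact Finset.mem_biUnion.mpr ⟨s, hs, Finset.mem_filter.mpr ⟨Finset.mem_univ _, hprop⟩⟩
    _ ≤ ∑ s ∈ Finset.Ico 1 n, (Finset.univ.filter
          fun π : Equiv.Perm (Fin n) => ∀ i : Fin n, (i : ℕ) < s → (π i : ℕ) < s).card :=
        Finset.card_biUnion_le
    _ ≤ ∑ s ∈ Finset.Ico 1 n, s.factorial * (n - s).factorial := by
        apply Finset.sum_le_sum
        intro s hs
        exact card_block (le_of_lt (Finset.mem_Ico.mp hs).2)

lemma T_lower {n : ℕ} (hn : 1 ≤ n) :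
    n.factorial - (∑ s ∈ Finset.Ico 1 n, s.factorial * (n - s).factorial) ≤ T n 1 := by
  classical
  have key := Finset.card_filter_add_card_filter_not
    (s := (Finset.univ : Finset (Equiv.Perm (Fin n))))
    (p := fun π => numComponents π = 1)
  have hcard : (Finset.univ : Finset (Equiv.Perm (Fin n))).card = n.factorial := by
    rw [Finset.card_univ, Fintype.card_perm, Fintype.card_fin]
  have hD := D_le hn
  simp only [ne_eq] at hD
  rw [T]
  omega

lemma mid_fact : ∀ s : ℕ, 2 ≤ s → ∀ n : ℕ, 2 * s ≤ n →
    s.factorial * (n - s).factorial ≤ 2 * (n - 2).factorial := by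
  intro s h2
  induction s, h2 using Nat.le_induction with
  | base =>
    intro n hn
    have h : n - 2 = n - 2 := rfl
    simp [Nat.factorial]
  | succ s hs ih =>
    intro n hn
    have ih' := ih n (by omega)
    have e1 : n - s = (n - (s + 1)) + 1 := by omega
    calc (s + 1).factorial * (n - (s + 1)).factorial
        = (s + 1) * (s.factorial * (n - (s + 1)).factorial) := by
          rw [Nat.factorial_succ]; ring
      _ ≤ (n - s) * (s.factorial * (n - (s + 1)).factorial) := by
          apply Nat.mul_le_mul_right; omega
      _ = s.factorial * ((n - s) * (n - (s + 1)).factorial) := by ring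
      _ = s.factorial * (n - s).factorial := by
          rw [e1, Nat.factorial_succ]
      _ ≤ 2 * (n - 2).factorial := ih'

lemma mid_fact' {n s : ℕ} (h2 : 2 ≤ s) (hs : s ≤ n - 2) (hn : 4 ≤ n) :
    s.factorial * (n - s).factorial ≤ 2 * (n - 2).factorial := by
  rcases le_or_gt (2 * s) n with h | h
  · exact mid_fact s h2 n h
  · have h2' : 2 ≤ n - s := by omega
    have hmid : 2 * (n - s) ≤ n := by omega
    have := mid_fact (n - s) h2' n hmid
    have e : n - (n - s) = s := by omega
    rw [e] at this
    calc s.factorial * (n - s).factorial = (n - s).factorial * s.factorial := by ring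
      _ ≤ 2 * (n - 2).factorial := this

lemma sum_bound {n : ℕ} (hn : 4 ≤ n) :
    ∑ s ∈ Finset.Ico 1 n, s.factorial * (n - s).factorial ≤ 4 * (n - 1).factorial := by
  obtain ⟨m, rfl⟩ : ∃ m, n = m + 1 := ⟨n - 1, by omega⟩
  have hm : 3 ≤ m := by omega
  have e0 : m + 1 - 1 = m := by omega
  rw [e0]
  rw [Finset.sum_Ico_succ_top (by omega : 1 ≤ m)]
  rw [Finset.sum_eq_sum_Ico_succ_bot (by omega : 1 < m)]
  have e1 : m + 1 - m = 1 := by omega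
  rw [e0, e1]
  norm_num
  have mid : ∑ s ∈ Finset.Ico 2 m, s.factorial * (m + 1 - s).factorial
      ≤ (m - 2) * (2 * (m - 1).factorial) := by
    calc ∑ s ∈ Finset.Ico 2 m, s.factorial * (m + 1 - s).factorial
        ≤ ∑ _s ∈ Finset.Ico 2 m, 2 * (m + 1 - 2).factorial := by
          apply Finset.sum_le_sum
          intro s hs
          rw [Finset.mem_Ico] at hs
          exact mid_fact' hs.1 (by omega) (by omega)
      _ = (m - 2) * (2 * (m - 1).factorial) := by
          have h21 : m + 1 - 2 = m - 1 := by omega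
          rw [h21, Finset.sum_const, smul_eq_mul, Nat.card_Ico]
  have e3 : m.factorial = m * (m - 1).factorial := by
    conv_lhs => rw [show m = (m - 1) + 1 by omega, Nat.factorial_succ]
    congr 1
    omega
  have h4 : (m - 2) * (2 * (m - 1).factorial) + 2 * m.factorial ≤ 4 * m.factorial := by
    rw [e3]
    have : (m - 2) * 2 ≤ 2 * m := by omega
    calc (m - 2) * (2 * (m - 1).factorial) + 2 * (m * (m - 1).factorial)
        = ((m - 2) * 2 + 2 * m) * (m - 1).factorial := by ring
      _ ≤ (2 * m + 2 * m) * (m - 1).factorial := Nat.mul_le_mul_right _ (by omega)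
      _ = 4 * (m * (m - 1).factorial) := by ring
  omega

theorem stmt2 :
    Filter.Tendsto (fun n : ℕ => (T n 1 : ℝ) / Nat.factorial n) Filter.atTop (nhds 1) := by
  have hupper : ∀ n : ℕ, (T n 1 : ℝ) / Nat.factorial n ≤ 1 := by
    intro n
    have hpos : (0 : ℝ) < Nat.factorial n := by positivity
    rw [div_le_one hpos]
    have : T n 1 ≤ Nat.factorial n := by
      rw [T]
      calc (Finset.univ.filter fun π : Equiv.Perm (Fin n) => numComponents π = 1).card
          ≤ (Finset.univ : Finset (Equiv.Perm (Fin n))).card := Finset.card_le_card (Finset.filter_subset _ _)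
        _ = Nat.factorial n := by rw [Finset.card_univ, Fintype.card_perm, Fintype.card_fin]
    exact_mod_cast this
  have hlower : ∀ n : ℕ, 4 ≤ n → 1 - 4 / (n : ℝ) ≤ (T n 1 : ℝ) / Nat.factorial n := by
    intro n hn
    have hfac : Nat.factorial n = n * Nat.factorial (n - 1) := by
      conv_lhs => rw [show n = (n - 1) + 1 by omega, Nat.factorial_succ]
      congr 2
      omega
    have h1 : Nat.factorial n - 4 * Nat.factorial (n - 1) ≤ T n 1 := by
      have := T_lower (by omega : 1 ≤ n)
      have := sum_bound hn
      omega
    have h2 : 4 * Nat.factorial (n - 1) ≤ Nat.factorial n := by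
      rw [hfac]
      exact Nat.mul_le_mul_right _ hn
    have h3 : (Nat.factorial n : ℝ) - 4 * Nat.factorial (n - 1) ≤ (T n 1 : ℝ) := by
      have := h1
      have hcast : ((Nat.factorial n - 4 * Nat.factorial (n - 1) : ℕ) : ℝ)
          = (Nat.factorial n : ℝ) - 4 * Nat.factorial (n - 1) := by
        push_cast [Nat.cast_sub h2]
        ring
      calc (Nat.factorial n : ℝ) - 4 * Nat.factorial (n - 1)
          = ((Nat.factorial n - 4 * Nat.factorial (n - 1) : ℕ) : ℝ) := hcast.symm
        _ ≤ (T n 1 : ℝ) := by exact_mod_cast h1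
    have hpos : (0 : ℝ) < Nat.factorial n := by positivity
    rw [le_div_iff₀ hpos]
    have hn0 : (0 : ℝ) < (n : ℝ) := by positivity
    have key : (1 - 4 / (n : ℝ)) * Nat.factorial n = (Nat.factorial n : ℝ) - 4 * Nat.factorial (n - 1) := by
      rw [sub_mul, one_mul]
      congr 1
      rw [div_mul_eq_mul_div, eq_comm, eq_div_iff (ne_of_gt hn0)]
      have : (Nat.factorial n : ℝ) = (n : ℝ) * Nat.factorial (n - 1) := by
        exact_mod_cast congrArg (fun x : ℕ => (x : ℝ)) hfac
      rw [this]
      ring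
    rw [key]
    exact h3
  have hg : Filter.Tendsto (fun n : ℕ => 1 - 4 / (n : ℝ)) Filter.atTop (nhds 1) := by
    have : Filter.Tendsto (fun n : ℕ => 4 / (n : ℝ)) Filter.atTop (nhds 0) :=
      tendsto_const_div_atTop_nhds_zero_nat 4
    have := Filter.Tendsto.sub (tendsto_const_nhds (x := (1 : ℝ))) this
    simpa using this
  refine tendsto_of_tendsto_of_tendsto_of_le_of_le' hg tendsto_const_nhds ?_ ?_
  · filter_upwards [Filter.eventually_ge_atTop 4] with n hn
    exact hlower n hn
  · filter_upwards with n
    exact hupper n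
end

section
/- For any n ≥ k ≥ 1, T(n,k) ≤ k * sum over all (k-1)-tuples of positive integers (s_1,...,s_{k-1}) with max_j s_j ≤ n - sum_j s_j of the product (n - sum_{j=1}^{k-1} s_j)! * prod_{j=1}^{k-1} s_j!. -/
namespace Stmt6Aux

/-- Extended partial sums of a tuple. -/
def csum (K : ℕ) (t : Fin K → ℕ) (j : ℕ) : ℕ :=
  ∑ i ∈ Finset.range j, if h : i < K then t ⟨i, h⟩ else 0

lemma csum_zero (K : ℕ) (t : Fin K → ℕ) : csum K t 0 = 0 := by simp [csum]

lemma csum_succ (K : ℕ) (t : Fin K → ℕ) (j : ℕ) (hj : j < K) :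
    csum K t (j + 1) = csum K t j + t ⟨j, hj⟩ := by
  simp [csum, Finset.sum_range_succ, hj]

lemma csum_mono (K : ℕ) (t : Fin K → ℕ) : Monotone (csum K t) := fun a b hab =>
  Finset.sum_le_sum_of_subset (Finset.range_subset_range.2 hab)

lemma csum_total (K : ℕ) (t : Fin K → ℕ) : csum K t K = ∑ i, t i := by
  rw [csum, ← Fin.sum_univ_eq_sum_range (fun i => if h : i < K then t ⟨i, h⟩ else 0)]
  exact Finset.sum_congr rfl fun i _ => by simp [i.isLt]

/-- block index of `x` w.r.t. the composition `t`. -/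
def blk {n K : ℕ} (t : Fin (K + 1) → ℕ) (x : Fin n) : Fin (K + 1) :=
  ⟨Nat.findGreatest (fun j => csum (K + 1) t j ≤ (x : ℕ)) K,
    Nat.lt_succ_of_le (Nat.findGreatest_le K)⟩

lemma csum_blk_le {n K : ℕ} (t : Fin (K + 1) → ℕ) (x : Fin n) :
    csum (K + 1) t ((blk t x : Fin (K+1)) : ℕ) ≤ (x : ℕ) := by
  rcases Nat.eq_zero_or_pos ((blk t x : Fin (K+1)) : ℕ) with h | h
  · rw [h, csum_zero]; exact Nat.zero_le _
  · exact Nat.findGreatest_of_ne_zero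
      (P := fun j => csum (K + 1) t j ≤ (x : ℕ)) (m := ((blk t x : Fin (K+1)) : ℕ)) rfl (by omega)

lemma lt_csum_blk_succ {n K : ℕ} (t : Fin (K + 1) → ℕ)
    (htot : csum (K + 1) t (K + 1) = n) (x : Fin n) :
    (x : ℕ) < csum (K + 1) t (((blk t x : Fin (K+1)) : ℕ) + 1) := by
  by_contra hcon
  push_neg at hcon
  by_cases h : ((blk t x : Fin (K+1)) : ℕ) + 1 ≤ K
  · have h2 : ((blk t x : Fin (K+1)) : ℕ) + 1 ≤ ((blk t x : Fin (K+1)) : ℕ) :=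
      Nat.le_findGreatest h hcon
    omega
  · have hK : ((blk t x : Fin (K+1)) : ℕ) = K := by
      have := (blk t x).isLt; omega
    rw [hK, htot] at hcon
    have := x.isLt; omega

lemma blk_eq_iff {n K : ℕ} (t : Fin (K + 1) → ℕ)
    (htot : csum (K + 1) t (K + 1) = n) (x : Fin n) (j : Fin (K + 1)) :
    blk t x = j ↔ csum (K + 1) t (j : ℕ) ≤ (x : ℕ) ∧ (x : ℕ) < csum (K + 1) t ((j : ℕ) + 1) := by
  constructor
  · rintro rfl; exact ⟨csum_blk_le t x, lt_csum_blk_succ t htot x⟩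
  · rintro ⟨h1, h2⟩
    have hle : (j : ℕ) ≤ ((blk t x : Fin (K+1)) : ℕ) :=
      Nat.le_findGreatest (by have := j.isLt; omega) h1
    have hge : ((blk t x : Fin (K+1)) : ℕ) ≤ (j : ℕ) := by
      by_contra hcon
      push_neg at hcon
      have : csum (K + 1) t ((j : ℕ) + 1) ≤ csum (K + 1) t ((blk t x : Fin (K+1)) : ℕ) :=
        csum_mono _ _ (by omega)
      have := csum_blk_le t x
      omega
    exact Fin.ext (by omega)

lemma card_fiber {n K : ℕ} (t : Fin (K + 1) → ℕ)
    (htot : csum (K + 1) t (K + 1) = n) (j : Fin (K + 1)) :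
    (Finset.univ.filter fun x : Fin n => blk t x = j).card = t j := by
  have heq : (Finset.univ.filter fun x : Fin n => blk t x = j) =
      Finset.univ.filter fun x : Fin n =>
        csum (K + 1) t (j : ℕ) ≤ (x : ℕ) ∧ (x : ℕ) < csum (K + 1) t ((j : ℕ) + 1) := by
    apply Finset.filter_congr
    intro x _
    exact blk_eq_iff t htot x j
  have hle : csum (K + 1) t ((j : ℕ) + 1) ≤ n := by
    have : csum (K + 1) t ((j : ℕ) + 1) ≤ csum (K + 1) t (K + 1) :=
      csum_mono _ _ (by have := j.isLt; omega)
    omega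
  have hcard : (Finset.univ.filter fun x : Fin n =>
      csum (K + 1) t (j : ℕ) ≤ (x : ℕ) ∧ (x : ℕ) < csum (K + 1) t ((j : ℕ) + 1)).card =
      (Finset.Ico (csum (K + 1) t (j : ℕ)) (csum (K + 1) t ((j : ℕ) + 1))).card := by
    refine Finset.card_bij (fun x _ => (x : ℕ)) ?_ ?_ ?_
    · intro x hx
      simp only [Finset.mem_filter, Finset.mem_univ, true_and] at hx
      exact Finset.mem_Ico.2 hx
    · intro a _ b _ h
      exact Fin.ext h
    · intro m hm
      rw [Finset.mem_Ico] at hm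
      exact ⟨⟨m, lt_of_lt_of_le hm.2 hle⟩, by simp [hm.1, hm.2], rfl⟩
  rw [heq, hcard, Nat.card_Ico]
  rw [csum_succ (K + 1) t (j : ℕ) j.isLt]
  simp

lemma stab_card_le {n : ℕ} (K : ℕ) (f : Fin n → Fin K) :
    (Finset.univ.filter fun π : Equiv.Perm (Fin n) => ∀ x, f (π x) = f x).card
      ≤ ∏ j : Fin K, Nat.factorial ((Finset.univ.filter fun x => f x = j).card) := by
  classical
  have h1 : (Finset.univ.filter fun π : Equiv.Perm (Fin n) => ∀ x, f (π x) = f x).card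
      = Fintype.card {π : Equiv.Perm (Fin n) // ∀ x, f (π x) = f x} := by
    rw [Fintype.card_subtype]
  have h2 : ∀ j : Fin K, (Finset.univ.filter fun x => f x = j).card
      = Fintype.card {x : Fin n // f x = j} := fun j => by rw [Fintype.card_subtype]
  rw [h1]
  have hinj : Function.Injective
      (fun (π : {π : Equiv.Perm (Fin n) // ∀ x, f (π x) = f x}) =>
        (fun j : Fin K =>
          (⟨fun y : {x // f x = j} => ⟨π.1 y.1, by rw [π.2 y.1, y.2]⟩,
            fun a b hab => Subtype.ext (π.1.injective (congrArg Subtype.val hab))⟩ :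
              {x // f x = j} ↪ {x // f x = j}))) := by
    intro π1 π2 h
    apply Subtype.ext
    apply Equiv.ext
    intro x
    have h3 := congrFun h (f x)
    have h4 := DFunLike.congr_fun h3 (⟨x, rfl⟩ : {y // f y = f x})
    exact congrArg Subtype.val h4
  calc Fintype.card {π : Equiv.Perm (Fin n) // ∀ x, f (π x) = f x}
      ≤ Fintype.card (∀ j : Fin K, ({x // f x = j} ↪ {x // f x = j})) :=
        Fintype.card_le_of_injective _ hinj
    _ = ∏ j : Fin K, Fintype.card ({x // f x = j} ↪ {x // f x = j}) := Fintype.card_pi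
    _ = ∏ j : Fin K, Nat.factorial (Fintype.card {x : Fin n // f x = j}) := by
        refine Finset.prod_congr rfl fun j _ => ?_
        rw [Fintype.card_embedding_eq, Nat.descFactorial_self]
    _ = ∏ j : Fin K, Nat.factorial ((Finset.univ.filter fun x => f x = j).card) := by
        refine Finset.prod_congr rfl fun j _ => by rw [h2]

lemma perm_prefix {n : ℕ} (π : Equiv.Perm (Fin n)) (m : ℕ)
    (h : ∀ x : Fin n, (x : ℕ) < m → (π x : ℕ) < m) :
    ∀ x : Fin n, m ≤ (x : ℕ) → m ≤ (π x : ℕ) := by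
  intro x hx
  by_contra hcon
  push_neg at hcon
  set A := Finset.univ.filter (fun y : Fin n => (y : ℕ) < m) with hA
  have himg : A.image π ⊆ A := by
    intro y hy
    rw [Finset.mem_image] at hy
    obtain ⟨z, hz, rfl⟩ := hy
    rw [hA, Finset.mem_filter] at hz ⊢
    exact ⟨Finset.mem_univ _, h z hz.2⟩
  have hcardeq : (A.image π).card = A.card := Finset.card_image_of_injective A π.injective
  have heqA : A.image π = A := Finset.eq_of_subset_of_card_le himg (le_of_eq hcardeq.symm)
  have hmem : π x ∈ A := by rw [hA, Finset.mem_filter]; exact ⟨Finset.mem_univ _, hcon⟩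
  rw [← heqA, Finset.mem_image] at hmem
  obtain ⟨z, hz, hzx⟩ := hmem
  have : z = x := π.injective hzx
  subst this
  rw [hA, Finset.mem_filter] at hz
  omega

lemma blk_perm {n K : ℕ} (t : Fin (K + 1) → ℕ)
    (htot : csum (K + 1) t (K + 1) = n) (π : Equiv.Perm (Fin n))
    (hpres : ∀ j : Fin (K + 1), ∀ x : Fin n,
      (x : ℕ) < csum (K + 1) t ((j : ℕ) + 1) → (π x : ℕ) < csum (K + 1) t ((j : ℕ) + 1)) :
    ∀ x, blk t (π x) = blk t x := by
  intro x
  rw [blk_eq_iff t htot]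
  constructor
  · rcases Nat.eq_zero_or_pos ((blk t x : Fin (K+1)) : ℕ) with h0 | hpos
    · rw [h0, csum_zero]; exact Nat.zero_le _
    · obtain ⟨j', hj'⟩ : ∃ j', ((blk t x : Fin (K+1)) : ℕ) = j' + 1 :=
        ⟨_, (Nat.succ_pred_eq_of_pos hpos).symm⟩
      have hj'lt : j' < K + 1 := by have := (blk t x).isLt; omega
      have hpre : ∀ y : Fin n, (y : ℕ) < csum (K + 1) t ((blk t x : Fin (K+1)) : ℕ) →
          (π y : ℕ) < csum (K + 1) t ((blk t x : Fin (K+1)) : ℕ) := by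
        intro y hy
        rw [hj'] at hy ⊢
        exact hpres ⟨j', hj'lt⟩ y hy
      exact perm_prefix π _ hpre x (csum_blk_le t x)
  · exact hpres (blk t x) x (lt_csum_blk_succ t htot x)

end Stmt6Aux

theorem stmt6 (n k : ℕ) (hk : 1 ≤ k) (hkn : k ≤ n) :
    T n k ≤ k * ∑ s ∈ (Fintype.piFinset fun _ : Fin (k - 1) => Finset.Icc 1 n).filter
        (fun s => ∀ j, s j ≤ n - ∑ i, s i),
      Nat.factorial (n - ∑ i, s i) * ∏ j, Nat.factorial (s j) := by
  classical
  open Stmt6Aux in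
  obtain ⟨K, rfl⟩ : ∃ K, k = K + 1 := ⟨k - 1, by omega⟩
  show T n (K + 1) ≤ (K + 1) *
      ∑ s ∈ (Fintype.piFinset fun _ : Fin K => Finset.Icc 1 n).filter
        (fun s => ∀ j, s j ≤ n - ∑ i, s i),
      Nat.factorial (n - ∑ i, s i) * ∏ j, Nat.factorial (s j)
  set S : Finset (Fin K → ℕ) := (Fintype.piFinset fun _ : Fin K => Finset.Icc 1 n).filter
      (fun s => ∀ j, s j ≤ n - ∑ i, s i) with hSdef
  set tf : Fin (K + 1) → (Fin K → ℕ) → (Fin (K + 1) → ℕ) :=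
    fun m s => m.insertNth (n - ∑ i, s i) s with htfdef
  set Bf : Fin (K + 1) → (Fin K → ℕ) → Finset (Equiv.Perm (Fin n)) := fun m s =>
    Finset.univ.filter fun π => ∀ x, blk (tf m s) (π x) = blk (tf m s) x with hBfdef
  -- sums of elements of S are at most n
  have hS_le : ∀ s ∈ S, ∑ i, s i ≤ n := by
    intro s hs
    rw [hSdef, Finset.mem_filter, Fintype.mem_piFinset] at hs
    by_contra hcon
    rcases Nat.eq_zero_or_pos K with hK0 | hKpos
    · subst hK0
      simp only [Finset.univ_eq_empty, Finset.sum_empty] at hcon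
      omega
    · have h1 := (Finset.mem_Icc.1 (hs.1 ⟨0, hKpos⟩)).1
      have h2 := hs.2 ⟨0, hKpos⟩
      omega
  have htot : ∀ (m : Fin (K + 1)), ∀ s ∈ S, csum (K + 1) (tf m s) (K + 1) = n := by
    intro m s hs
    rw [csum_total, Fin.sum_univ_succAbove (tf m s) m]
    simp only [htfdef, Fin.insertNth_apply_same, Fin.insertNth_apply_succAbove]
    have := hS_le s hs
    omega
  have hBcard : ∀ (m : Fin (K + 1)), ∀ s ∈ S, (Bf m s).card ≤
      Nat.factorial (n - ∑ i, s i) * ∏ j, Nat.factorial (s j) := by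
    intro m s hs
    calc (Bf m s).card
        ≤ ∏ j : Fin (K + 1),
            Nat.factorial ((Finset.univ.filter fun x => blk (tf m s) x = j).card) :=
          stab_card_le (K + 1) (blk (tf m s))
      _ = ∏ j : Fin (K + 1), Nat.factorial (tf m s j) :=
          Finset.prod_congr rfl fun j _ => by rw [card_fiber _ (htot m s hs) j]
      _ = Nat.factorial (n - ∑ i, s i) * ∏ j, Nat.factorial (s j) := by
          rw [Fin.prod_univ_succAbove (fun j => Nat.factorial (tf m s j)) m]
          simp only [htfdef, Fin.insertNth_apply_same, Fin.insertNth_apply_succAbove]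
  -- the main structural fact
  have hmain : ∀ π : Equiv.Perm (Fin n), numComponents π = K + 1 →
      ∃ m : Fin (K + 1), ∃ s : Fin K → ℕ, s ∈ S ∧ π ∈ Bf m s := by
    intro π hπ
    set Bs := (Finset.Icc 1 n).filter
      (fun s => ∀ i : Fin n, (i : ℕ) < s → (π i : ℕ) < s) with hBsdef
    have hcard : Bs.card = K + 1 := hπ
    set e := Bs.orderIsoOfFin hcard with hedef
    set b : Fin (K + 1) → ℕ := fun i => ((e i : Bs) : ℕ) with hbdef
    have hbmem : ∀ i, b i ∈ Bs := fun i => (e i).2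
    have hbmono : StrictMono b := fun i j hij => by
      have := e.strictMono hij
      exact Subtype.coe_lt_coe.2 this
    have hb1 : ∀ i, 1 ≤ b i ∧ b i ≤ n := fun i =>
      Finset.mem_Icc.1 (Finset.mem_filter.1 (hbmem i)).1
    have hbprop : ∀ i, ∀ x : Fin n, (x : ℕ) < b i → (π x : ℕ) < b i := fun i =>
      (Finset.mem_filter.1 (hbmem i)).2
    have hn1 : 1 ≤ n := by omega
    have hn_mem : n ∈ Bs := by
      rw [hBsdef, Finset.mem_filter, Finset.mem_Icc]
      exact ⟨⟨hn1, le_rfl⟩, fun i _ => (π i).isLt⟩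
    have hblast : b (Fin.last K) = n := by
      obtain ⟨i, hi⟩ := e.surjective ⟨n, hn_mem⟩
      have h1 : b i = n := congrArg Subtype.val hi
      have h2 : b i ≤ b (Fin.last K) := hbmono.monotone (Fin.le_last i)
      have h3 := (hb1 (Fin.last K)).2
      omega
    set c : ℕ → ℕ := fun j =>
      if h : 1 ≤ j ∧ j ≤ K + 1 then b ⟨j - 1, by omega⟩ else if j = 0 then 0 else n with hcdef
    have hc0 : c 0 = 0 := by simp [hcdef]
    have hcs' : ∀ j (h : j < K + 1), c (j + 1) = b ⟨j, h⟩ := by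
      intro j h
      simp only [hcdef]
      rw [dif_pos ⟨by omega, by omega⟩]
      exact congrArg b (Fin.ext rfl)
    have hcmono : ∀ j, j ≤ K → c j < c (j + 1) := by
      intro j hj
      rw [hcs' j (by omega)]
      rcases Nat.eq_zero_or_pos j with rfl | hpos
      · rw [hc0]
        have := (hb1 ⟨0, by omega⟩).1
        omega
      · have hcj : c j = b ⟨j - 1, by omega⟩ := by
          simp only [hcdef]; rw [dif_pos ⟨hpos, by omega⟩]
        rw [hcj]
        exact hbmono (by rw [Fin.lt_def]; simp; omega)
    set t : Fin (K + 1) → ℕ := fun i => c ((i : ℕ) + 1) - c (i : ℕ) with htdef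
    have ht_pos : ∀ i, 1 ≤ t i := by
      intro i
      have := hcmono (i : ℕ) (Nat.lt_succ_iff.1 i.isLt)
      simp only [htdef]
      omega
    have hcsum : ∀ j, j ≤ K + 1 → csum (K + 1) t j = c j := by
      intro j hj
      induction j with
      | zero => rw [csum_zero, hc0]
      | succ j ih =>
        rw [csum_succ (K + 1) t j (by omega), ih (by omega)]
        have h1 := hcmono j (by omega)
        simp only [htdef]
        omega
    have hsumt : ∑ i, t i = n := by
      rw [← csum_total, hcsum (K + 1) le_rfl, hcs' K (by omega)]
      exact hblast
    obtain ⟨m, -, hm⟩ := Finset.exists_max_image Finset.univ t Finset.univ_nonempty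
    have hm' : ∀ i, t i ≤ t m := fun i => hm i (Finset.mem_univ i)
    have htm_le : t m ≤ n := by
      rw [← hsumt]
      exact Finset.single_le_sum (fun i _ => Nat.zero_le _) (Finset.mem_univ m)
    have hSs : ∑ j : Fin K, t (m.succAbove j) = n - t m := by
      have hsp := Fin.sum_univ_succAbove t m
      omega
    have htm : t m = n - ∑ j : Fin K, t (m.succAbove j) := by omega
    have hts : t = m.insertNth (n - ∑ j : Fin K, t (m.succAbove j)) (fun j => t (m.succAbove j)) := by
      rw [← htm]
      funext i
      refine Fin.succAboveCases m ?_ ?_ i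
      · rw [Fin.insertNth_apply_same]
      · intro j; rw [Fin.insertNth_apply_succAbove]
    refine ⟨m, fun j => t (m.succAbove j), ?_, ?_⟩
    · rw [hSdef, Finset.mem_filter, Fintype.mem_piFinset]
      constructor
      · intro j
        rw [Finset.mem_Icc]
        exact ⟨ht_pos _, le_trans (hm' _) htm_le⟩
      · intro j
        rw [← htm]
        exact hm' _
    · rw [hBfdef]
      simp only [Finset.mem_filter, Finset.mem_univ, true_and]
      have htfeq : tf m (fun j => t (m.succAbove j)) = t := by
        rw [htfdef]
        exact hts.symm
      rw [htfeq]
      apply blk_perm t (by rw [csum_total, hsumt]) π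
      intro j x hx
      rw [hcsum ((j : ℕ) + 1) (by omega), hcs' (j : ℕ) j.isLt] at hx ⊢
      exact hbprop ⟨(j : ℕ), j.isLt⟩ x hx
  -- assemble
  rw [T]
  calc (Finset.univ.filter fun π : Equiv.Perm (Fin n) => numComponents π = K + 1).card
      ≤ ((Finset.univ : Finset (Fin (K + 1))).sigma fun m => S.sigma fun s => Bf m s).card := by
        apply Finset.card_le_card_of_injOn (fun π =>
          if h : numComponents π = K + 1 then
            (⟨(hmain π h).choose, (hmain π h).choose_spec.choose, π⟩ :
              Σ _ : Fin (K + 1), Σ _ : Fin K → ℕ, Equiv.Perm (Fin n))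
          else ⟨0, fun _ => 0, π⟩)
        · intro π hπ
          simp only [Finset.mem_coe] at hπ ⊢; rw [Finset.mem_filter] at hπ
          rw [dif_pos hπ.2]
          have spec := (hmain π hπ.2).choose_spec.choose_spec
          exact Finset.mem_sigma.2 ⟨Finset.mem_univ _, Finset.mem_sigma.2 ⟨spec.1, spec.2⟩⟩
        · intro π1 h1 π2 h2 heq
          rw [Finset.mem_coe, Finset.mem_filter] at h1 h2
          dsimp only at heq
          rw [dif_pos h1.2, dif_pos h2.2] at heq
          exact congrArg
            (fun p : (Σ _ : Fin (K + 1), Σ _ : Fin K → ℕ, Equiv.Perm (Fin n)) => p.2.2) heq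
    _ = ∑ m : Fin (K + 1), ∑ s ∈ S, (Bf m s).card := by
        rw [Finset.card_sigma]
        exact Finset.sum_congr rfl fun m _ => Finset.card_sigma _ _
    _ ≤ ∑ _m : Fin (K + 1), ∑ s ∈ S,
          Nat.factorial (n - ∑ i, s i) * ∏ j, Nat.factorial (s j) :=
        Finset.sum_le_sum fun m _ => Finset.sum_le_sum fun s hs => hBcard m s hs
    _ = (K + 1) * ∑ s ∈ S,
          Nat.factorial (n - ∑ i, s i) * ∏ j, Nat.factorial (s j) := by
        rw [Finset.sum_const, Finset.card_univ, Fintype.card_fin, smul_eq_mul]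
end

section
/- There exists a positive constant c such that for all n ≥ k ≥ 1, T(n,k) ≤ k * (n-k+1)! * exp(c(k-1)/(n-k+1)). -/
open Finset

-- exp(1) ≤ ((n+1)/n)^(n+1)
lemma exp_le_pow_succ (n : ℕ) (hn : 1 ≤ n) : Real.exp 1 ≤ (((n:ℝ)+1)/n)^(n+1) := by
  have hn0 : (0:ℝ) < n := by exact_mod_cast hn
  have hx : (0:ℝ) < 1/((n:ℝ)+1) := by positivity
  have h1 : Real.exp (1/((n:ℝ)+1)) ≤ ((n:ℝ)+1)/n := by
    have h2 : (1:ℝ) - 1/((n:ℝ)+1) ≤ Real.exp (-(1/((n:ℝ)+1))) := by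
      have := Real.add_one_le_exp (-(1/((n:ℝ)+1))); linarith
    have h3 : (1:ℝ) - 1/((n:ℝ)+1) = n/((n:ℝ)+1) := by field_simp; ring
    rw [h3] at h2
    have h4 : (0:ℝ) < n/((n:ℝ)+1) := by positivity
    have h5 := Real.exp_neg (1/((n:ℝ)+1))
    rw [h5] at h2
    rw [le_div_iff₀ hn0]
    have hE := Real.exp_pos (1/((n:ℝ)+1))
    have h6 := mul_le_mul_of_nonneg_left h2 hE.le
    rw [mul_inv_cancel₀ hE.ne'] at h6
    have h7 : (0:ℝ) < (n:ℝ)+1 := by positivity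
    have h8 := mul_le_mul_of_nonneg_left h6 h7.le
    have h9 : ((n:ℝ)+1) * (Real.exp (1/((n:ℝ)+1)) * ((n:ℝ)/((n:ℝ)+1))) = Real.exp (1/((n:ℝ)+1)) * n := by
      field_simp
    rw [h9, mul_one] at h8
    exact h8
  calc Real.exp 1 = Real.exp (1/((n:ℝ)+1)) ^ (n+1) := by
        rw [← Real.exp_nat_mul]
        congr 1
        field_simp
        norm_num
    _ ≤ (((n:ℝ)+1)/n)^(n+1) := by
        apply pow_le_pow_left₀ (Real.exp_pos _).le h1

-- n! * e^n ≤ 3 n^(n+3)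
lemma factorial_le_aux : ∀ n : ℕ, 1 ≤ n → (n.factorial : ℝ) * Real.exp 1 ^ n ≤ 3 * (n:ℝ)^(n+3) := by
  intro n hn
  induction n, hn using Nat.le_induction with
  | base =>
    simp [Nat.factorial]
    nlinarith [Real.exp_one_lt_d9]
  | succ n hn ih =>
    have hn0 : (0:ℝ) < n := by exact_mod_cast hn
    have he : Real.exp 1 * (n:ℝ)^(n+3) ≤ ((n:ℝ)+1)^(n+3) := by
      have h1 : Real.exp 1 ≤ (((n:ℝ)+1)/n)^(n+1) := exp_le_pow_succ n hn
      have h2 : (((n:ℝ)+1)/n)^(n+1) ≤ (((n:ℝ)+1)/n)^(n+3) := by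
        apply pow_le_pow_right₀
        · rw [le_div_iff₀ hn0]; linarith
        · omega
      have h3 : Real.exp 1 ≤ (((n:ℝ)+1)/n)^(n+3) := h1.trans h2
      have h4 : (((n:ℝ)+1)/n)^(n+3) * (n:ℝ)^(n+3) = ((n:ℝ)+1)^(n+3) := by
        rw [div_pow, div_mul_cancel₀]
        positivity
      calc Real.exp 1 * (n:ℝ)^(n+3) ≤ (((n:ℝ)+1)/n)^(n+3) * (n:ℝ)^(n+3) := by
            apply mul_le_mul_of_nonneg_right h3 (by positivity)
        _ = ((n:ℝ)+1)^(n+3) := h4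
    have hfact : ((n+1).factorial : ℝ) = ((n:ℝ)+1) * n.factorial := by
      rw [Nat.factorial_succ]; push_cast; ring
    have hexp : Real.exp 1 ^ (n+1) = Real.exp 1 ^ n * Real.exp 1 := pow_succ _ _
    rw [hfact, hexp]
    have hf0 : (0:ℝ) ≤ (n.factorial:ℝ) := by positivity
    calc ((n:ℝ)+1) * n.factorial * (Real.exp 1 ^ n * Real.exp 1)
        = ((n:ℝ)+1) * ((n.factorial:ℝ) * Real.exp 1 ^ n) * Real.exp 1 := by ring
      _ ≤ ((n:ℝ)+1) * (3 * (n:ℝ)^(n+3)) * Real.exp 1 := by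
          apply mul_le_mul_of_nonneg_right _ (Real.exp_pos 1).le
          apply mul_le_mul_of_nonneg_left ih (by positivity)
      _ = 3 * ((n:ℝ)+1) * (Real.exp 1 * (n:ℝ)^(n+3)) := by ring
      _ ≤ 3 * ((n:ℝ)+1) * ((n:ℝ)+1)^(n+3) := by
          apply mul_le_mul_of_nonneg_left he (by positivity)
      _ = 3 * ((n:ℝ)+1)^(n+1+3) := by ring
      _ = 3 * (((n+1:ℕ)):ℝ)^(n+1+3) := by push_cast; ring

-- (x)! * (x+1)^y ≤ (x+y)!  in ℕ
lemma factorial_mul_pow_le (x : ℕ) : ∀ y : ℕ, x.factorial * (x+1)^y ≤ (x+y).factorial := by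
  intro y
  induction y with
  | zero => simp
  | succ y ih =>
    have : x.factorial * (x+1)^(y+1) = x.factorial * (x+1)^y * (x+1) := by ring
    rw [this]
    calc x.factorial * (x+1)^y * (x+1) ≤ (x+y).factorial * (x+1) :=
          Nat.mul_le_mul_right _ ih
      _ ≤ (x+y).factorial * (x+y+1) := by
          apply Nat.mul_le_mul_left; omega
      _ = (x+(y+1)).factorial := by
          have : x+(y+1) = (x+y)+1 := by omega
          rw [this, Nat.factorial_succ, Nat.mul_comm]

lemma poly5a : ∀ c : ℕ, 1 ≤ c → ((c:ℝ)+1)^5 ≤ 537824 * (10/7)^(c-1) := by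
  intro c hc
  induction c, hc using Nat.le_induction with
  | base => norm_num
  | succ c hc ih =>
    rcases le_or_gt c 12 with h | h
    · have h1 : ((c:ℝ)+1)+1 ≤ 14 := by
        have : (c:ℝ) ≤ 12 := by exact_mod_cast h
        linarith
      calc (((c+1:ℕ):ℝ)+1)^5 ≤ (14:ℝ)^5 := by
            push_cast
            apply pow_le_pow_left₀ (by positivity) (by push_cast; linarith)
        _ = 537824 := by norm_num
        _ ≤ 537824 * (10/7)^(c+1-1) := by
            nlinarith [one_le_pow₀ (show (1:ℝ) ≤ 10/7 by norm_num) (n := c+1-1)]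
    · -- c ≥ 13
      have hc13 : (13:ℝ) ≤ (c:ℝ) := by exact_mod_cast h
      have key : (((c:ℝ)+1)+1)^5 ≤ (10/7) * ((c:ℝ)+1)^5 := by
        have h1 : ((c:ℝ)+1)+1 ≤ (15/14) * ((c:ℝ)+1) := by linarith
        calc (((c:ℝ)+1)+1)^5 ≤ ((15/14) * ((c:ℝ)+1))^5 := by
              apply pow_le_pow_left₀ (by positivity) h1
          _ = (15/14)^5 * ((c:ℝ)+1)^5 := by ring
          _ ≤ (10/7) * ((c:ℝ)+1)^5 := by nlinarith [pow_nonneg (show (0:ℝ) ≤ (c:ℝ)+1 by positivity) 5]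
      have hstep : (10/7:ℝ) * (537824 * (10/7)^(c-1)) = 537824 * (10/7)^(c+1-1) := by
        have hc1 : c - 1 + 1 = c + 1 - 1 := by omega
        rw [← hc1, pow_succ]
        ring
      calc (((c+1:ℕ):ℝ)+1)^5 = (((c:ℝ)+1)+1)^5 := by push_cast; ring
        _ ≤ (10/7) * ((c:ℝ)+1)^5 := key
        _ ≤ (10/7) * (537824 * (10/7)^(c-1)) := by
            apply mul_le_mul_of_nonneg_left ih (by norm_num)
        _ = 537824 * (10/7)^(c+1-1) := hstep

lemma poly5b : ∀ d : ℕ, 2 ≤ d → ((d:ℝ))^5 ≤ 75937500000 * (25/24)^(d-2) := by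
  intro d hd
  induction d, hd using Nat.le_induction with
  | base => norm_num
  | succ d hd ih =>
    rcases le_or_gt d 149 with h | h
    · have h1 : ((d:ℝ))+1 ≤ 150 := by
        have : (d:ℝ) ≤ 149 := by exact_mod_cast h
        linarith
      calc (((d+1:ℕ)):ℝ)^5 ≤ (150:ℝ)^5 := by
            push_cast
            apply pow_le_pow_left₀ (by positivity) h1
        _ = 75937500000 := by norm_num
        _ ≤ 75937500000 * (25/24)^(d+1-2) := by
            nlinarith [one_le_pow₀ (show (1:ℝ) ≤ 25/24 by norm_num) (n := d+1-2)]
    · have hd150 : (150:ℝ) ≤ (d:ℝ) := by exact_mod_cast h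
      have key : ((d:ℝ)+1)^5 ≤ (25/24) * ((d:ℝ))^5 := by
        have h1 : ((d:ℝ))+1 ≤ (151/150) * (d:ℝ) := by linarith
        calc ((d:ℝ)+1)^5 ≤ ((151/150) * (d:ℝ))^5 := by
              apply pow_le_pow_left₀ (by positivity) h1
          _ = (151/150)^5 * ((d:ℝ))^5 := by ring
          _ ≤ (25/24) * ((d:ℝ))^5 := by nlinarith [pow_nonneg (show (0:ℝ) ≤ (d:ℝ) by positivity) 5]
      have hstep : (25/24:ℝ) * (75937500000 * (25/24)^(d-2)) = 75937500000 * (25/24)^(d+1-2) := by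
        have hc1 : d - 2 + 1 = d + 1 - 2 := by omega
        rw [← hc1, pow_succ]
        ring
      calc (((d+1:ℕ)):ℝ)^5 = ((d:ℝ)+1)^5 := by push_cast; ring
        _ ≤ (25/24) * ((d:ℝ))^5 := key
        _ ≤ (25/24) * (75937500000 * (25/24)^(d-2)) := by
            apply mul_le_mul_of_nonneg_left ih (by norm_num)
        _ = 75937500000 * (25/24)^(d+1-2) := hstep

lemma exp_pow_nat (c : ℕ) : Real.exp c = Real.exp 1 ^ c := by
  rw [← Real.exp_nat_mul]; norm_num

-- main per-term estimate
set_option maxHeartbeats 1000000 in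
lemma per_term (c D j : ℕ) (hc : 1 ≤ c) (hj : 1 ≤ j) (hjD : j + 1 ≤ D) :
    ((c+1).factorial : ℝ) * (D.factorial) * ((c:ℝ)+D)^j / ((D:ℝ)^(j-1) * ((c+D).factorial)) ≤
    1075648 * (20/21)^(c-1) + 91125000000 * (23/24)^(D-2) := by
  have hD2 : 2 ≤ D := by omega
  have hcR : (1:ℝ) ≤ c := by exact_mod_cast hc
  have hDR : (2:ℝ) ≤ D := by exact_mod_cast hD2
  have hDpos : (0:ℝ) < D := by linarith
  have hY : (0:ℝ) < (D:ℝ)^(j-1) * ((c+D).factorial) := by positivity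
  rw [div_le_iff₀ hY]
  have hA : (0:ℝ) ≤ 1075648 * (20/21)^(c-1) := by positivity
  have hB : (0:ℝ) ≤ 91125000000 * (23/24)^(D-2) := by positivity
  rcases le_or_gt (3*c+2) (2*D) with hAcase | hBcase
  · -- Zone A
    have goalA : ((c+1).factorial : ℝ) * (D.factorial) * ((c:ℝ)+D)^j ≤
        (1075648 * (20/21)^(c-1)) * ((D:ℝ)^(j-1) * ((c+D).factorial)) := by
      -- A1 : (c+D)^(j-1) ≤ e^c * D^(j-1)
      have hA1 : ((c:ℝ)+D)^(j-1) ≤ Real.exp 1 ^ c * (D:ℝ)^(j-1) := by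
        have h1 : (c:ℝ)+D ≤ Real.exp ((c:ℝ)/D) * D := by
          have := Real.add_one_le_exp ((c:ℝ)/D)
          have h2 := mul_le_mul_of_nonneg_right this hDpos.le
          calc (c:ℝ)+D = ((c:ℝ)/D + 1) * D := by field_simp
            _ ≤ Real.exp ((c:ℝ)/D) * D := h2
        calc ((c:ℝ)+D)^(j-1) ≤ (Real.exp ((c:ℝ)/D) * D)^(j-1) := by
              apply pow_le_pow_left₀ (by positivity) h1
          _ = Real.exp ((c:ℝ)/D)^(j-1) * (D:ℝ)^(j-1) := mul_pow _ _ _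
          _ ≤ Real.exp 1 ^ c * (D:ℝ)^(j-1) := by
              apply mul_le_mul_of_nonneg_right _ (by positivity)
              rw [← Real.exp_nat_mul, ← exp_pow_nat]
              apply Real.exp_le_exp.2
              have hj1D : ((j-1:ℕ):ℝ) ≤ (D:ℝ) := by
                have h9 : ((j-1:ℕ)) ≤ D := by omega
                exact_mod_cast h9
              have hcD : (0:ℝ) ≤ (c:ℝ)/D := by positivity
              calc ((j-1:ℕ):ℝ) * ((c:ℝ)/D) ≤ (D:ℝ) * ((c:ℝ)/D) :=
                    mul_le_mul_of_nonneg_right hj1D hcD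
                _ = (c:ℝ) := by field_simp
      -- A2 : D! * (D+1)^c ≤ (c+D)!
      have hA2 : (D.factorial : ℝ) * ((D:ℝ)+1)^c ≤ ((c+D).factorial : ℝ) := by
        have := factorial_mul_pow_le D c
        have h2 : (D + c) = (c + D) := by omega
        rw [h2] at this
        exact_mod_cast this
      -- A3 : (c+1)! * e^c ≤ (6/5) (c+1)^(c+4)
      have hA3 : (((c+1).factorial : ℝ)) * Real.exp 1 ^ c ≤ (6/5) * ((c:ℝ)+1)^(c+4) := by
        have hFL := factorial_le_aux (c+1) (by omega)
        have he : (5/2 : ℝ) ≤ Real.exp 1 := by nlinarith [Real.exp_one_gt_d9]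
        have hcast : (((c+1:ℕ)):ℝ) = (c:ℝ)+1 := by push_cast; ring
        rw [hcast] at hFL
        have hpow : Real.exp 1 ^ (c+1) = Real.exp 1 ^ c * Real.exp 1 := pow_succ _ _
        rw [hpow] at hFL
        have hfc : (0:ℝ) ≤ ((c+1).factorial : ℝ) * Real.exp 1 ^ c := by positivity
        nlinarith [hfc]
      -- A6 : (c+1)^c * (c+D) ≤ (5/3)*(2/3)^(c-1) *(c+1)* (D+1)^c
      have h3c : 3*((c:ℝ)+1) ≤ 2*((D:ℝ)+1) := by
        have : (3*c+2 : ℝ) ≤ 2*D := by exact_mod_cast hAcase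
        linarith
      have hA6 : ((c:ℝ)+1)^c * ((c:ℝ)+D) ≤ (5/3)*(2/3)^(c-1) * ((c:ℝ)+1) * ((D:ℝ)+1)^c := by
        have h1 : ((c:ℝ)+1)^(c-1) ≤ (2/3)^(c-1) * ((D:ℝ)+1)^(c-1) := by
          calc ((c:ℝ)+1)^(c-1) ≤ ((2/3) * ((D:ℝ)+1))^(c-1) := by
                apply pow_le_pow_left₀ (by positivity) (by linarith)
            _ = (2/3)^(c-1) * ((D:ℝ)+1)^(c-1) := mul_pow _ _ _
        have h2 : ((c:ℝ)+D) ≤ (5/3) * ((D:ℝ)+1) := by linarith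
        have hsplit : ((c:ℝ)+1)^c = ((c:ℝ)+1)^(c-1) * ((c:ℝ)+1) := by
          rw [← pow_succ]
          congr 1
          omega
        have hsplit2 : ((D:ℝ)+1)^c = ((D:ℝ)+1)^(c-1) * ((D:ℝ)+1) := by
          rw [← pow_succ]
          congr 1
          omega
        rw [hsplit, hsplit2]
        have hp1 : (0:ℝ) ≤ ((c:ℝ)+1)^(c-1) := by positivity
        have hp2 : (0:ℝ) ≤ (2/3:ℝ)^(c-1) * ((D:ℝ)+1)^(c-1) := by positivity
        nlinarith [pow_nonneg (show (0:ℝ) ≤ (D:ℝ)+1 by linarith) (c-1),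
          mul_le_mul h1 h2 (by linarith) hp2]
      -- assemble
      have hsplitj : ((c:ℝ)+D)^j = ((c:ℝ)+D)^(j-1) * ((c:ℝ)+D) := by
        rw [← pow_succ]
        congr 1
        omega
      have key : ((c+1).factorial : ℝ) * Real.exp 1 ^ c * ((c:ℝ)+D) * (D.factorial : ℝ) ≤
          (1075648 * (20/21)^(c-1)) * ((c+D).factorial : ℝ) := by
        have step1 : ((c+1).factorial : ℝ) * Real.exp 1 ^ c * ((c:ℝ)+D) ≤
            (6/5) * ((c:ℝ)+1)^4 * (((c:ℝ)+1)^c * ((c:ℝ)+D)) := by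
          have h4 : ((c:ℝ)+1)^(c+4) = ((c:ℝ)+1)^4 * ((c:ℝ)+1)^c := by
            rw [← pow_add]; congr 1; omega
          have := mul_le_mul_of_nonneg_right hA3 (show (0:ℝ) ≤ (c:ℝ)+D by positivity)
          calc ((c+1).factorial : ℝ) * Real.exp 1 ^ c * ((c:ℝ)+D)
              ≤ (6/5) * ((c:ℝ)+1)^(c+4) * ((c:ℝ)+D) := this
            _ = (6/5) * ((c:ℝ)+1)^4 * (((c:ℝ)+1)^c * ((c:ℝ)+D)) := by rw [h4]; ring
        have step2 : (6/5:ℝ) * ((c:ℝ)+1)^4 * (((c:ℝ)+1)^c * ((c:ℝ)+D)) ≤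
            (6/5) * ((c:ℝ)+1)^4 * ((5/3)*(2/3)^(c-1) * ((c:ℝ)+1) * ((D:ℝ)+1)^c) := by
          apply mul_le_mul_of_nonneg_left hA6 (by positivity)
        have step3 : (6/5:ℝ) * ((c:ℝ)+1)^4 * ((5/3)*(2/3)^(c-1) * ((c:ℝ)+1) * ((D:ℝ)+1)^c) =
            2 * ((c:ℝ)+1)^5 * (2/3)^(c-1) * ((D:ℝ)+1)^c := by ring
        have step4 : 2 * ((c:ℝ)+1)^5 * (2/3)^(c-1) ≤ 1075648 * (20/21)^(c-1) := by
          have := poly5a c hc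
          have h20 : ((10:ℝ)/7)^(c-1) * (2/3)^(c-1) = (20/21)^(c-1) := by
            rw [← mul_pow]; norm_num
          have hp : (0:ℝ) ≤ (2/3:ℝ)^(c-1) := by positivity
          calc 2 * ((c:ℝ)+1)^5 * (2/3)^(c-1) ≤ 2 * (537824 * (10/7)^(c-1)) * (2/3)^(c-1) := by
                apply mul_le_mul_of_nonneg_right _ hp
                nlinarith
            _ = 1075648 * ((10/7)^(c-1) * (2/3)^(c-1)) := by ring
            _ = 1075648 * (20/21)^(c-1) := by rw [h20]
        have hfD : (0:ℝ) ≤ (D.factorial : ℝ) := by positivity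
        calc ((c+1).factorial : ℝ) * Real.exp 1 ^ c * ((c:ℝ)+D) * (D.factorial : ℝ)
            ≤ (2 * ((c:ℝ)+1)^5 * (2/3)^(c-1) * ((D:ℝ)+1)^c) * (D.factorial : ℝ) := by
              apply mul_le_mul_of_nonneg_right _ hfD
              calc ((c+1).factorial : ℝ) * Real.exp 1 ^ c * ((c:ℝ)+D)
                  ≤ (6/5) * ((c:ℝ)+1)^4 * (((c:ℝ)+1)^c * ((c:ℝ)+D)) := step1
                _ ≤ (6/5) * ((c:ℝ)+1)^4 * ((5/3)*(2/3)^(c-1) * ((c:ℝ)+1) * ((D:ℝ)+1)^c) := step2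
                _ = 2 * ((c:ℝ)+1)^5 * (2/3)^(c-1) * ((D:ℝ)+1)^c := step3
          _ ≤ (1075648 * (20/21)^(c-1)) * ((c+D).factorial : ℝ) := by
              have h5 : (2:ℝ) * ((c:ℝ)+1)^5 * (2/3)^(c-1) * ((D:ℝ)+1)^c * (D.factorial:ℝ) =
                  (2 * ((c:ℝ)+1)^5 * (2/3)^(c-1)) * ((D.factorial:ℝ) * ((D:ℝ)+1)^c) := by ring
              rw [h5]
              have h6 : (0:ℝ) ≤ 2 * ((c:ℝ)+1)^5 * (2/3)^(c-1) := by positivity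
              calc (2 * ((c:ℝ)+1)^5 * (2/3)^(c-1)) * ((D.factorial:ℝ) * ((D:ℝ)+1)^c)
                  ≤ (2 * ((c:ℝ)+1)^5 * (2/3)^(c-1)) * ((c+D).factorial : ℝ) := by
                    apply mul_le_mul_of_nonneg_left hA2 h6
                _ ≤ (1075648 * (20/21)^(c-1)) * ((c+D).factorial : ℝ) := by
                    apply mul_le_mul_of_nonneg_right step4 (by positivity)
      -- from key and A1
      calc ((c+1).factorial : ℝ) * (D.factorial) * ((c:ℝ)+D)^j
          = ((c+1).factorial : ℝ) * (D.factorial) * (((c:ℝ)+D)^(j-1) * ((c:ℝ)+D)) := by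
            rw [hsplitj]
        _ ≤ ((c+1).factorial : ℝ) * (D.factorial) * ((Real.exp 1 ^ c * (D:ℝ)^(j-1)) * ((c:ℝ)+D)) := by
            apply mul_le_mul_of_nonneg_left _ (by positivity)
            apply mul_le_mul_of_nonneg_right hA1 (by positivity)
        _ = (((c+1).factorial : ℝ) * Real.exp 1 ^ c * ((c:ℝ)+D) * (D.factorial : ℝ)) * (D:ℝ)^(j-1) := by
            ring
        _ ≤ ((1075648 * (20/21)^(c-1)) * ((c+D).factorial : ℝ)) * (D:ℝ)^(j-1) := by
            apply mul_le_mul_of_nonneg_right key (by positivity)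
        _ = (1075648 * (20/21)^(c-1)) * ((D:ℝ)^(j-1) * ((c+D).factorial)) := by ring
    calc ((c+1).factorial : ℝ) * (D.factorial) * ((c:ℝ)+D)^j
        ≤ (1075648 * (20/21)^(c-1)) * ((D:ℝ)^(j-1) * ((c+D).factorial)) := goalA
      _ ≤ (1075648 * (20/21)^(c-1) + 91125000000 * (23/24)^(D-2)) * ((D:ℝ)^(j-1) * ((c+D).factorial)) := by
          apply mul_le_mul_of_nonneg_right _ hY.le
          linarith
  · -- Zone B : 2*D < 3*c+2
    set B : ℝ := 91125000000 * (23/24)^(D-2) with hBdef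
    have hDD : (0:ℝ) < (D:ℝ)^(D-2) := by positivity
    have hexpD : (0:ℝ) < Real.exp 1 ^ D := by positivity
    -- c2c : D! * (5/2)^(D-1) ≤ B * D^(D-2)
    have c2c : (D.factorial : ℝ) * (5/2)^(D-1) ≤ B * (D:ℝ)^(D-2) := by
      have hFL := factorial_le_aux D (by omega)
      have hE1 : (5/2 : ℝ) ≤ (23/25) * Real.exp 1 := by nlinarith [Real.exp_one_gt_d9]
      have hE : ((5:ℝ)/2)^D ≤ (23/25)^D * Real.exp 1 ^ D := by
        calc ((5:ℝ)/2)^D ≤ ((23/25) * Real.exp 1)^D := by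
              apply pow_le_pow_left₀ (by norm_num) hE1
          _ = (23/25)^D * Real.exp 1 ^ D := mul_pow _ _ _
      have hP : ((D:ℝ))^5 ≤ 75937500000 * (25/24)^(D-2) := poly5b D hD2
      have hid1 : ((5:ℝ)/2)^(D-1) = (2/5) * (5/2)^D := by
        have hD' : D = (D-1) + 1 := by omega
        calc ((5:ℝ)/2)^(D-1) = (2/5) * ((5/2)^(D-1) * (5/2)) := by ring
          _ = (2/5) * (5/2)^((D-1)+1) := by rw [pow_succ]
          _ = (2/5) * (5/2)^D := by rw [← hD']
      have hid2 : ((D:ℝ))^(D+3) = (D:ℝ)^(D-2) * (D:ℝ)^5 := by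
        rw [← pow_add]
        congr 1
        omega
      have hid3 : ((25:ℝ)/24)^(D-2) * (23/25)^D = (23/24)^(D-2) * (23/25)^2 := by
        have h1 : ((23:ℝ)/25)^D = (23/25)^(D-2) * (23/25)^2 := by
          rw [← pow_add]
          congr 1
          omega
        rw [h1, ← mul_assoc, ← mul_pow]
        norm_num
      -- multiply by e^D and cancel
      rw [← mul_le_mul_iff_of_pos_right hexpD]
      calc (D.factorial : ℝ) * (5/2)^(D-1) * Real.exp 1 ^ D
          = ((D.factorial : ℝ) * Real.exp 1 ^ D) * (5/2)^(D-1) := by ring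
        _ ≤ (3 * (D:ℝ)^(D+3)) * (5/2)^(D-1) := by
            apply mul_le_mul_of_nonneg_right hFL (by positivity)
        _ = (6/5) * ((D:ℝ)^(D-2) * (D:ℝ)^5) * (5/2)^D := by
            rw [hid2, hid1]; ring
        _ ≤ (6/5) * ((D:ℝ)^(D-2) * (D:ℝ)^5) * ((23/25)^D * Real.exp 1 ^ D) := by
            apply mul_le_mul_of_nonneg_left hE (by positivity)
        _ = (6/5) * (D:ℝ)^5 * (23/25)^D * ((D:ℝ)^(D-2) * Real.exp 1 ^ D) := by ring
        _ ≤ (6/5) * (75937500000 * (25/24)^(D-2)) * (23/25)^D * ((D:ℝ)^(D-2) * Real.exp 1 ^ D) := by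
            apply mul_le_mul_of_nonneg_right _ (by positivity)
            apply mul_le_mul_of_nonneg_right _ (by positivity)
            nlinarith
        _ = 91125000000 * ((25/24)^(D-2) * (23/25)^D) * ((D:ℝ)^(D-2) * Real.exp 1 ^ D) := by ring
        _ = 91125000000 * ((23/24)^(D-2) * (23/25)^2) * ((D:ℝ)^(D-2) * Real.exp 1 ^ D) := by
            rw [hid3]
        _ ≤ 91125000000 * ((23/24)^(D-2) * 1) * ((D:ℝ)^(D-2) * Real.exp 1 ^ D) := by
            apply mul_le_mul_of_nonneg_right _ (by positivity)
            apply mul_le_mul_of_nonneg_left _ (by norm_num)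
            apply mul_le_mul_of_nonneg_left _ (by positivity)
            norm_num
        _ = B * (D:ℝ)^(D-2) * Real.exp 1 ^ D := by rw [hBdef]; ring
    -- c2a : (c+1)! * (c+2)^(D-1) ≤ (c+D)!
    have c2a : ((c+1).factorial : ℝ) * ((c:ℝ)+2)^(D-1) ≤ ((c+D).factorial : ℝ) := by
      have h1 := factorial_mul_pow_le (c+1) (D-1)
      have h2 : c + 1 + (D-1) = c + D := by omega
      rw [h2] at h1
      have h3 : (((c+1)+1 : ℕ):ℝ) = (c:ℝ)+2 := by push_cast; ring
      calc ((c+1).factorial : ℝ) * ((c:ℝ)+2)^(D-1)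
          = (((c+1).factorial * (c+1+1)^(D-1) : ℕ) : ℝ) := by push_cast; ring
        _ ≤ ((c+D).factorial : ℝ) := by exact_mod_cast h1
    -- c2b : (c+D)^(D-1) ≤ (5/2)^(D-1) * (c+2)^(D-1)
    have c2b : ((c:ℝ)+D)^(D-1) ≤ (5/2)^(D-1) * ((c:ℝ)+2)^(D-1) := by
      have h1 : (c:ℝ)+D ≤ (5/2) * ((c:ℝ)+2) := by
        have : (2*D : ℝ) ≤ 3*c+1 := by
          have : 2*D ≤ 3*c+1 := by omega
          exact_mod_cast this
        linarith
      calc ((c:ℝ)+D)^(D-1) ≤ ((5/2) * ((c:ℝ)+2))^(D-1) := by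
            apply pow_le_pow_left₀ (by positivity) h1
        _ = (5/2)^(D-1) * ((c:ℝ)+2)^(D-1) := mul_pow _ _ _
    -- claim2 : (c+1)! * D! * (c+D)^(D-1) ≤ B * (c+D)! * D^(D-2)
    have claim2 : ((c+1).factorial : ℝ) * (D.factorial) * ((c:ℝ)+D)^(D-1) ≤
        B * ((c+D).factorial : ℝ) * (D:ℝ)^(D-2) := by
      calc ((c+1).factorial : ℝ) * (D.factorial) * ((c:ℝ)+D)^(D-1)
          ≤ ((c+1).factorial : ℝ) * (D.factorial) * ((5/2)^(D-1) * ((c:ℝ)+2)^(D-1)) := by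
            apply mul_le_mul_of_nonneg_left c2b (by positivity)
        _ = (((c+1).factorial : ℝ) * ((c:ℝ)+2)^(D-1)) * ((D.factorial : ℝ) * (5/2)^(D-1)) := by
            ring
        _ ≤ ((c+D).factorial : ℝ) * (B * (D:ℝ)^(D-2)) := by
            apply mul_le_mul c2a c2c (by positivity) (by positivity)
        _ = B * ((c+D).factorial : ℝ) * (D:ℝ)^(D-2) := by ring
    -- B1 : (c+D)^j * D^(D-2) ≤ (c+D)^(D-1) * D^(j-1)
    have hB1 : ((c:ℝ)+D)^j * (D:ℝ)^(D-2) ≤ ((c:ℝ)+D)^(D-1) * (D:ℝ)^(j-1) := by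
      obtain ⟨t, ht2⟩ : ∃ t, D - 1 = j + t := ⟨D-1-j, by omega⟩
      have ht : D - 2 = (j-1) + t := by omega
      have h1 : (D:ℝ)^t ≤ ((c:ℝ)+D)^t := by
        apply pow_le_pow_left₀ hDpos.le (by linarith)
      calc ((c:ℝ)+D)^j * (D:ℝ)^(D-2) = ((c:ℝ)+D)^j * (D:ℝ)^(j-1) * (D:ℝ)^t := by
            rw [ht, pow_add]; ring
        _ ≤ ((c:ℝ)+D)^j * (D:ℝ)^(j-1) * ((c:ℝ)+D)^t := by
            apply mul_le_mul_of_nonneg_left h1 (by positivity)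
        _ = ((c:ℝ)+D)^(D-1) * (D:ℝ)^(j-1) := by
            rw [ht2, pow_add]; ring
    -- assemble
    rw [← mul_le_mul_iff_of_pos_right hDD]
    calc ((c+1).factorial : ℝ) * (D.factorial) * ((c:ℝ)+D)^j * (D:ℝ)^(D-2)
        = (((c:ℝ)+D)^j * (D:ℝ)^(D-2)) * (((c+1).factorial : ℝ) * (D.factorial)) := by ring
      _ ≤ (((c:ℝ)+D)^(D-1) * (D:ℝ)^(j-1)) * (((c+1).factorial : ℝ) * (D.factorial)) := by
          apply mul_le_mul_of_nonneg_right hB1 (by positivity)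
      _ = (((c+1).factorial : ℝ) * (D.factorial) * ((c:ℝ)+D)^(D-1)) * (D:ℝ)^(j-1) := by ring
      _ ≤ (B * ((c+D).factorial : ℝ) * (D:ℝ)^(D-2)) * (D:ℝ)^(j-1) := by
          apply mul_le_mul_of_nonneg_right claim2 (by positivity)
      _ = (B * ((D:ℝ)^(j-1) * ((c+D).factorial))) * (D:ℝ)^(D-2) := by ring
      _ ≤ ((1075648 * (20/21)^(c-1) + B) * ((D:ℝ)^(j-1) * ((c+D).factorial))) * (D:ℝ)^(D-2) := by
          apply mul_le_mul_of_nonneg_right _ hDD.le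
          apply mul_le_mul_of_nonneg_right _ hY.le
          linarith

lemma geo_le (r : ℝ) (h0 : 0 ≤ r) (h1 : r < 1) (N : ℕ) :
    ∑ i ∈ Finset.range N, r^i ≤ 1/(1-r) := by
  rw [geom_sum_eq (by intro h; rw [h] at h1; linarith) N]
  have he : (r^N - 1)/(r-1) = (1 - r^N)/(1-r) := by
    rw [← neg_div_neg_eq]
    ring_nf
  rw [he, div_le_div_iff₀ (by linarith) (by linarith)]
  nlinarith [pow_nonneg h0 N]

lemma CI (s j : ℕ) (hj : 1 ≤ j) :
    ∑ c ∈ Finset.Icc 1 (s-j),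
      ((c+1).factorial : ℝ) * (((s-c)+1).factorial) / (((s-c:ℕ):ℝ)+1)^(j-1)
    ≤ 10^13 * (((s+1).factorial : ℝ)) / ((s:ℝ)+1)^j := by
  have hsfac : (0:ℝ) < ((s+1).factorial : ℝ) := by positivity
  have hs1 : (0:ℝ) < ((s:ℝ)+1)^j := by positivity
  -- termwise
  have hterm : ∀ c ∈ Finset.Icc 1 (s-j),
      ((c+1).factorial : ℝ) * (((s-c)+1).factorial) / (((s-c:ℕ):ℝ)+1)^(j-1) ≤
      (1075648 * (20/21)^(c-1) + 91125000000 * (23/24)^(s-c-1)) *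
        (((s+1).factorial : ℝ) / ((s:ℝ)+1)^j) := by
    intro c hcmem
    rw [Finset.mem_Icc] at hcmem
    obtain ⟨hc1, hc2⟩ := hcmem
    have hjs : j ≤ s - c := by omega
    have hcs : c ≤ s := by omega
    set D : ℕ := (s-c)+1 with hDdef
    have hcD : c + D = s + 1 := by omega
    have hjD : j + 1 ≤ D := by omega
    have hDcast : ((s-c:ℕ):ℝ)+1 = (D:ℝ) := by
      rw [hDdef]; push_cast; ring
    have hpt := per_term c D j hc1 hj hjD
    have hD2exp : D - 2 = s - c - 1 := by omega
    have hcDcast : ((c:ℝ)+(D:ℝ)) = ((s:ℝ)+1) := by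
      have : ((c+D : ℕ):ℝ) = ((s+1:ℕ):ℝ) := by exact_mod_cast congrArg (Nat.cast (R := ℝ)) hcD
      push_cast at this
      linarith
    rw [hcDcast, hD2exp, hcD] at hpt
    -- hpt : (c+1)! * D! * (s+1)^j / (D^(j-1) * (s+1)!) ≤ E
    rw [hDcast]
    have hDpow : (0:ℝ) < (D:ℝ)^(j-1) := by positivity
    rw [div_le_iff₀ hDpow]
    rw [div_le_iff₀ (by positivity : (0:ℝ) < (D:ℝ)^(j-1) * ((s+1).factorial : ℝ))] at hpt
    rw [← mul_le_mul_iff_of_pos_right hs1]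
    calc ((c+1).factorial : ℝ) * (D.factorial) * ((s:ℝ)+1)^j
        ≤ (1075648 * (20/21)^(c-1) + 91125000000 * (23/24)^(s-c-1)) *
          ((D:ℝ)^(j-1) * ((s+1).factorial : ℝ)) := hpt
      _ = (1075648 * (20/21)^(c-1) + 91125000000 * (23/24)^(s-c-1)) *
          (((s+1).factorial : ℝ) / ((s:ℝ)+1)^j) * (D:ℝ)^(j-1) * ((s:ℝ)+1)^j := by
          field_simp
  have hQ : (0:ℝ) ≤ ((s+1).factorial : ℝ) / ((s:ℝ)+1)^j := by positivity
  calc ∑ c ∈ Finset.Icc 1 (s-j),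
        ((c+1).factorial : ℝ) * (((s-c)+1).factorial) / (((s-c:ℕ):ℝ)+1)^(j-1)
      ≤ ∑ c ∈ Finset.Icc 1 (s-j),
        (1075648 * (20/21)^(c-1) + 91125000000 * (23/24)^(s-c-1)) *
          (((s+1).factorial : ℝ) / ((s:ℝ)+1)^j) := Finset.sum_le_sum hterm
    _ = (∑ c ∈ Finset.Icc 1 (s-j),
        (1075648 * (20/21)^(c-1) + 91125000000 * (23/24)^(s-c-1))) *
          (((s+1).factorial : ℝ) / ((s:ℝ)+1)^j) := by rw [Finset.sum_mul]
    _ ≤ (10^13 : ℝ) * (((s+1).factorial : ℝ) / ((s:ℝ)+1)^j) := by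
        apply mul_le_mul_of_nonneg_right _ hQ
        have hsum1 : ∑ c ∈ Finset.Icc 1 (s-j), ((20:ℝ)/21)^(c-1) ≤ 21 := by
          rw [← Finset.Ico_add_one_right_eq_Icc, Finset.sum_Ico_eq_sum_range]
          have : ∀ i ∈ Finset.range (s-j+1-1), ((20:ℝ)/21)^(1+i-1) = (20/21)^i := by
            intro i _
            congr 1
            omega
          rw [Finset.sum_congr rfl this]
          calc ∑ i ∈ Finset.range (s-j+1-1), ((20:ℝ)/21)^i ≤ 1/(1-20/21) :=
                geo_le _ (by norm_num) (by norm_num) _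
            _ = 21 := by norm_num
        have hsum2 : ∑ c ∈ Finset.Icc 1 (s-j), ((23:ℝ)/24)^(s-c-1) ≤ 24 := by
          have hinj : Set.InjOn (fun c => s-c-1) (Finset.Icc 1 (s-j)) := by
            intro a ha b hb hab
            simp only [Finset.coe_Icc, Set.mem_Icc] at ha hb
            simp only at hab
            omega
          rw [← Finset.sum_image hinj]
          calc ∑ e ∈ (Finset.Icc 1 (s-j)).image (fun c => s-c-1), ((23:ℝ)/24)^e
              ≤ ∑ e ∈ Finset.range s, ((23:ℝ)/24)^e := by
                apply Finset.sum_le_sum_of_subset_of_nonneg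
                · intro e he
                  rw [Finset.mem_image] at he
                  obtain ⟨c, hc, rfl⟩ := he
                  rw [Finset.mem_Icc] at hc
                  rw [Finset.mem_range]
                  omega
                · intro e _ _
                  positivity
            _ ≤ 1/(1-23/24) := geo_le _ (by norm_num) (by norm_num) _
            _ ≤ 24 := by norm_num
        calc ∑ c ∈ Finset.Icc 1 (s-j),
            (1075648 * ((20:ℝ)/21)^(c-1) + 91125000000 * (23/24)^(s-c-1))
            = 1075648 * (∑ c ∈ Finset.Icc 1 (s-j), ((20:ℝ)/21)^(c-1)) +
              91125000000 * (∑ c ∈ Finset.Icc 1 (s-j), ((23:ℝ)/24)^(s-c-1)) := by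
              rw [Finset.sum_add_distrib, Finset.mul_sum, Finset.mul_sum]
          _ ≤ 1075648 * 21 + 91125000000 * 24 := by
              have h1 : (0:ℝ) ≤ 1075648 := by norm_num
              have h2 : (0:ℝ) ≤ 91125000000 := by norm_num
              nlinarith [hsum1, hsum2]
          _ ≤ (10:ℝ)^13 := by norm_num
    _ = (10^13 : ℝ) * (((s+1).factorial : ℝ)) / ((s:ℝ)+1)^j := by rw [mul_div_assoc]

def Vc : ℕ → ℕ → ℕ
  | 0, s => if s = 0 then 1 else 0
  | (j+1), s => ∑ c ∈ Finset.Icc 1 s, (c+1).factorial * Vc j (s - c)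

lemma Vc_eq_zero : ∀ j s : ℕ, 1 ≤ j → s < j → Vc j s = 0 := by
  intro j
  induction j with
  | zero => omega
  | succ j ih =>
    intro s _ hs
    rw [Vc]
    apply Finset.sum_eq_zero
    intro c hc
    rw [Finset.mem_Icc] at hc
    rcases Nat.eq_zero_or_pos j with hj | hj
    · subst hj
      have : s - c ≠ 0 → False := by omega
      simp [Vc]
      omega
    · rw [ih (s-c) hj (by omega)]
      ring

lemma Vc_one_le (s : ℕ) : Vc 1 s ≤ (s+1).factorial := by
  rw [Vc]
  calc ∑ c ∈ Finset.Icc 1 s, (c+1).factorial * Vc 0 (s - c)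
      ≤ ∑ c ∈ Finset.Icc 1 s, (if c = s then (s+1).factorial else 0) := by
        apply Finset.sum_le_sum
        intro c hc
        rw [Finset.mem_Icc] at hc
        rcases eq_or_ne c s with h | h
        · subst h
          simp [Vc]
        · have : s - c ≠ 0 := by omega
          simp [Vc, this, h]
    _ ≤ (s+1).factorial := by
      rw [Finset.sum_ite_eq' (Finset.Icc 1 s) s (fun _ => (s+1).factorial)]
      split <;> omega

lemma Vc_le : ∀ j, 1 ≤ j → ∀ s : ℕ,
    (Vc j s : ℝ) ≤ j * (10^13:ℝ)^(j-1) * ((s+1).factorial) / ((s:ℝ)+1)^(j-1) := by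
  intro j hj
  induction j, hj using Nat.le_induction with
  | base =>
    intro s
    simp only [pow_zero, Nat.sub_self]
    have := Vc_one_le s
    have h2 : (Vc 1 s : ℝ) ≤ ((s+1).factorial : ℝ) := by exact_mod_cast this
    simpa using h2
  | succ j hj ih =>
    intro s
    have hK : (0:ℝ) < (10^13:ℝ) := by norm_num
    have hcast : (Vc (j+1) s : ℝ) = ∑ c ∈ Finset.Icc 1 s,
        ((c+1).factorial : ℝ) * (Vc j (s-c) : ℝ) := by
      rw [Vc]
      push_cast
      rfl
    rw [hcast]
    have hstep : ∑ c ∈ Finset.Icc 1 s, ((c+1).factorial : ℝ) * (Vc j (s-c) : ℝ) ≤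
        ∑ c ∈ Finset.Icc 1 s, (if c + j ≤ s then
          ((j:ℝ) * (10^13:ℝ)^(j-1)) *
            (((c+1).factorial : ℝ) * (((s-c)+1).factorial) / (((s-c:ℕ):ℝ)+1)^(j-1))
          else 0) := by
      apply Finset.sum_le_sum
      intro c hc
      rw [Finset.mem_Icc] at hc
      split_ifs with h
      · have := ih (s-c)
        calc ((c+1).factorial : ℝ) * (Vc j (s-c) : ℝ)
            ≤ ((c+1).factorial : ℝ) *
              ((j:ℝ) * (10^13:ℝ)^(j-1) * (((s-c)+1).factorial) / (((s-c:ℕ):ℝ)+1)^(j-1)) := by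
              apply mul_le_mul_of_nonneg_left this (by positivity)
          _ = ((j:ℝ) * (10^13:ℝ)^(j-1)) *
              (((c+1).factorial : ℝ) * (((s-c)+1).factorial) / (((s-c:ℕ):ℝ)+1)^(j-1)) := by
              ring
      · have hz : Vc j (s-c) = 0 := Vc_eq_zero j (s-c) hj (by omega)
        rw [hz]
        simp
    have hfilter : ∑ c ∈ Finset.Icc 1 s, (if c + j ≤ s then
          ((j:ℝ) * (10^13:ℝ)^(j-1)) *
            (((c+1).factorial : ℝ) * (((s-c)+1).factorial) / (((s-c:ℕ):ℝ)+1)^(j-1))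
          else 0) =
        ((j:ℝ) * (10^13:ℝ)^(j-1)) * ∑ c ∈ Finset.Icc 1 (s-j),
          (((c+1).factorial : ℝ) * (((s-c)+1).factorial) / (((s-c:ℕ):ℝ)+1)^(j-1)) := by
      rw [Finset.mul_sum, ← Finset.sum_filter]
      congr 1
      ext c
      simp only [Finset.mem_filter, Finset.mem_Icc]
      omega
    rw [hfilter] at hstep
    have hCI := CI s j hj
    calc ∑ c ∈ Finset.Icc 1 s, ((c+1).factorial : ℝ) * (Vc j (s-c) : ℝ)
        ≤ ((j:ℝ) * (10^13:ℝ)^(j-1)) * ∑ c ∈ Finset.Icc 1 (s-j),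
          (((c+1).factorial : ℝ) * (((s-c)+1).factorial) / (((s-c:ℕ):ℝ)+1)^(j-1)) := hstep
      _ ≤ ((j:ℝ) * (10^13:ℝ)^(j-1)) * ((10^13:ℝ) * (((s+1).factorial : ℝ)) / ((s:ℝ)+1)^j) := by
          apply mul_le_mul_of_nonneg_left hCI (by positivity)
      _ ≤ ((j+1:ℕ):ℝ) * (10^13:ℝ)^((j+1)-1) * ((s+1).factorial) / ((s:ℝ)+1)^((j+1)-1) := by
          have h1 : (j+1:ℕ) - 1 = j := by omega
          rw [h1]
          have h2 : (j:ℝ) * (10^13:ℝ)^(j-1) * ((10^13:ℝ) * (((s+1).factorial : ℝ)) / ((s:ℝ)+1)^j)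
              = ((j:ℝ) * ((10^13:ℝ)^(j-1) * (10^13:ℝ))) * (((s+1).factorial : ℝ)) / ((s:ℝ)+1)^j := by
            ring
          rw [h2]
          have h3 : (10^13:ℝ)^(j-1) * (10^13:ℝ) = (10^13:ℝ)^j := by
            rw [← pow_succ]
            congr 1
            omega
          rw [h3]
          apply div_le_div_of_nonneg_right _ (by positivity)
          · apply mul_le_mul_of_nonneg_right _ (by positivity)
            apply mul_le_mul_of_nonneg_right _ (by positivity)
            push_cast
            linarith

def W (n k : ℕ) : ℕ := ∑ j ∈ Finset.range (k+1), k.choose j * Vc j (n - k)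

lemma W_rec (k n : ℕ) (hn : k + 1 ≤ n) :
    ∑ a ∈ Finset.Icc 1 (n-k), a.factorial * W (n-a) k = W n (k+1) := by
  set s := n - (k+1) with hs
  have hnk : n - k = s + 1 := by omega
  -- rewrite inner argument
  have hLHS : ∑ a ∈ Finset.Icc 1 (n-k), a.factorial * W (n-a) k =
      ∑ a ∈ Finset.Icc 1 (s+1), ∑ j ∈ Finset.range (k+1),
        a.factorial * (k.choose j * Vc j (s+1-a)) := by
    rw [hnk]
    apply Finset.sum_congr rfl
    intro a ha
    rw [Finset.mem_Icc] at ha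
    rw [W, Finset.mul_sum]
    apply Finset.sum_congr rfl
    intro j _
    have : n - a - k = s + 1 - a := by omega
    rw [this]
  rw [hLHS, Finset.sum_comm]
  -- inner sums
  have hinner : ∀ j, ∑ a ∈ Finset.Icc 1 (s+1), a.factorial * (k.choose j * Vc j (s+1-a)) =
      k.choose j * (Vc j s + Vc (j+1) s) := by
    intro j
    have h1 : ∑ a ∈ Finset.Icc 1 (s+1), a.factorial * (k.choose j * Vc j (s+1-a)) =
        k.choose j * ∑ a ∈ Finset.Icc 1 (s+1), a.factorial * Vc j (s+1-a) := by
      rw [Finset.mul_sum]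
      apply Finset.sum_congr rfl
      intro a _
      ring
    rw [h1]
    congr 1
    rw [← Finset.Ico_add_one_right_eq_Icc, Finset.sum_Ico_eq_sum_range]
    have h2 : s + 1 + 1 - 1 = s + 1 := by omega
    rw [h2, Finset.sum_range_succ']
    have h3 : (1 + 0).factorial * Vc j (s + 1 - (1 + 0)) = Vc j s := by
      norm_num
    rw [h3]
    have h4 : ∑ i ∈ Finset.range s, (1 + (i+1)).factorial * Vc j (s + 1 - (1 + (i+1))) =
        Vc (j+1) s := by
      rw [Vc, ← Finset.Ico_add_one_right_eq_Icc, Finset.sum_Ico_eq_sum_range]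
      have h5 : s + 1 - 1 = s := by omega
      rw [h5]
      apply Finset.sum_congr rfl
      intro i _
      have e1 : 1 + (i+1) = (1+i) + 1 := by omega
      rw [e1]
      have e2 : s + 1 - (1 + i + 1) = s - (1+i) := by omega
      rw [e2]
    rw [h4]
    omega
  rw [Finset.sum_congr rfl (fun j _ => hinner j)]
  -- Pascal
  rw [W]
  have hnk1 : n - (k+1) = s := by omega
  rw [hnk1]
  have hR : ∑ j ∈ Finset.range (k+2), (k+1).choose j * Vc j s =
      (∑ j ∈ Finset.range (k+1), k.choose j * Vc (j+1) s) +
      ((∑ j ∈ Finset.range (k+1), k.choose (j+1) * Vc (j+1) s) + Vc 0 s) := by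
    rw [Finset.sum_range_succ']
    have h0 : (k+1).choose 0 * Vc 0 s = Vc 0 s := by simp
    rw [h0]
    have hsplit : ∀ j, (k+1).choose (j+1) * Vc (j+1) s =
        k.choose j * Vc (j+1) s + k.choose (j+1) * Vc (j+1) s := by
      intro j
      rw [Nat.choose_succ_succ]
      ring
    rw [Finset.sum_congr rfl (fun j _ => hsplit j), Finset.sum_add_distrib]
    omega
  rw [hR]
  have hL : ∑ j ∈ Finset.range (k+1), k.choose j * (Vc j s + Vc (j+1) s) =
      (∑ j ∈ Finset.range (k+1), k.choose j * Vc j s) +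
      (∑ j ∈ Finset.range (k+1), k.choose j * Vc (j+1) s) := by
    rw [← Finset.sum_add_distrib]
    apply Finset.sum_congr rfl
    intro j _
    ring
  rw [hL]
  have hshift : ∑ j ∈ Finset.range (k+1), k.choose j * Vc j s =
      (∑ j ∈ Finset.range (k+1), k.choose (j+1) * Vc (j+1) s) + Vc 0 s := by
    rw [Finset.sum_range_succ']
    have h0 : k.choose 0 * Vc 0 s = Vc 0 s := by simp
    rw [h0]
    rw [Finset.sum_range_succ]
    have : k.choose (k+1) = 0 := Nat.choose_eq_zero_of_lt (by omega)
    rw [this]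
    omega
  omega

lemma W_le (n k : ℕ) (hk : 1 ≤ k) (hkn : k ≤ n) :
    (W n k : ℝ) ≤ k * (((n-k+1).factorial : ℝ)) * (1 + 10^13/((n-k+1:ℕ):ℝ))^(k-1) := by
  set m : ℕ := n - k + 1 with hm
  have hm1 : 1 ≤ m := by omega
  have hmR : (1:ℝ) ≤ (m:ℝ) := by exact_mod_cast hm1
  have hbase : (1:ℝ) ≤ 1 + 10^13/((m:ℕ):ℝ) := by
    have : (0:ℝ) < (m:ℝ) := by linarith
    have : (0:ℝ) ≤ 10^13/((m:ℕ):ℝ) := by positivity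
    linarith
  rcases eq_or_lt_of_le hm1 with hm2 | hm2
  · -- m = 1, n = k
    have hnk0 : n - k = 0 := by omega
    have hW : W n k = 1 := by
      rw [W, hnk0]
      rw [Finset.sum_range_succ']
      have h0 : k.choose 0 * Vc 0 0 = 1 := by simp [Vc]
      rw [h0]
      have hz : ∀ i ∈ Finset.range k, k.choose (i+1) * Vc (i+1) 0 = 0 := by
        intro i _
        rw [Vc_eq_zero (i+1) 0 (by omega) (by omega)]
        ring
      rw [Finset.sum_congr rfl hz]
      simp
    rw [hW]
    have hkR : (1:ℝ) ≤ (k:ℝ) := by exact_mod_cast hk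
    have hfac : (1:ℝ) ≤ ((m.factorial : ℕ):ℝ) := by
      exact_mod_cast Nat.one_le_iff_ne_zero.2 (Nat.factorial_ne_zero m)
    have hpow : (1:ℝ) ≤ (1 + 10^13/((m:ℕ):ℝ))^(k-1) := one_le_pow₀ hbase
    rw [Nat.cast_one]
    have h5 : (1:ℝ) ≤ (k:ℝ) * ((m.factorial : ℕ):ℝ) := by nlinarith
    have h6 := mul_le_mul h5 hpow zero_le_one (by positivity : (0:ℝ) ≤ (k:ℝ) * ((m.factorial : ℕ):ℝ))
    rw [one_mul] at h6
    linarith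
  · -- m ≥ 2
    have hs1 : n - k = m - 1 := by omega
    have hm1R : ((m-1:ℕ):ℝ) + 1 = (m:ℝ) := by
      have : 1 ≤ m := hm1
      push_cast [Nat.cast_sub this]
      ring
    have hWcast : (W n k : ℝ) = ∑ j ∈ Finset.range (k+1),
        (k.choose j : ℝ) * (Vc j (m-1) : ℝ) := by
      rw [W, hs1]
      push_cast
      rfl
    rw [hWcast]
    have hterm : ∀ j ∈ Finset.range (k+1),
        (k.choose j : ℝ) * (Vc j (m-1) : ℝ) ≤
        (k.choose j : ℝ) * j * (10^13:ℝ)^(j-1) * ((m.factorial : ℕ):ℝ) / ((m:ℝ))^(j-1) := by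
      intro j _
      rcases Nat.eq_zero_or_pos j with hj | hj
      · subst hj
        have : Vc 0 (m-1) = 0 := by
          simp [Vc]
          omega
        rw [this]
        simp
      · have hV := Vc_le j hj (m-1)
        have e1 : (m-1) + 1 = m := by omega
        rw [e1, hm1R] at hV
        calc (k.choose j : ℝ) * (Vc j (m-1) : ℝ)
            ≤ (k.choose j : ℝ) * ((j:ℝ) * (10^13:ℝ)^(j-1) * ((m.factorial : ℕ):ℝ) / ((m:ℝ))^(j-1)) := by
              apply mul_le_mul_of_nonneg_left hV (by positivity)
          _ = (k.choose j : ℝ) * j * (10^13:ℝ)^(j-1) * ((m.factorial : ℕ):ℝ) / ((m:ℝ))^(j-1) := by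
              ring
    calc ∑ j ∈ Finset.range (k+1), (k.choose j : ℝ) * (Vc j (m-1) : ℝ)
        ≤ ∑ j ∈ Finset.range (k+1),
          (k.choose j : ℝ) * j * (10^13:ℝ)^(j-1) * ((m.factorial : ℕ):ℝ) / ((m:ℝ))^(j-1) :=
          Finset.sum_le_sum hterm
      _ = ∑ i ∈ Finset.range k,
          (k.choose (i+1) : ℝ) * (i+1) * (10^13:ℝ)^i * ((m.factorial : ℕ):ℝ) / ((m:ℝ))^i := by
          rw [Finset.sum_range_succ']
          simp
      _ = ∑ i ∈ Finset.range k,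
          (k:ℝ) * ((k-1).choose i : ℝ) * ((10^13:ℝ)/(m:ℝ))^i * ((m.factorial : ℕ):ℝ) := by
          apply Finset.sum_congr rfl
          intro i _
          have hch : (k:ℝ) * ((k-1).choose i : ℝ) = (k.choose (i+1) : ℝ) * (i+1) := by
            have h2 := Nat.add_one_mul_choose_eq (k-1) i
            have h1 : k - 1 + 1 = k := by omega
            rw [h1] at h2
            exact_mod_cast congrArg (Nat.cast (R := ℝ)) h2
          rw [← hch]
          rw [div_pow]
          have hmpos : (0:ℝ) < (m:ℝ)^i := by positivity
          field_simp
      _ = (k:ℝ) * ((m.factorial : ℕ):ℝ) * ∑ i ∈ Finset.range k,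
          ((k-1).choose i : ℝ) * ((10^13:ℝ)/(m:ℝ))^i := by
          rw [Finset.mul_sum]
          apply Finset.sum_congr rfl
          intro i _
          ring
      _ = (k:ℝ) * ((m.factorial : ℕ):ℝ) * (1 + 10^13/((m:ℕ):ℝ))^(k-1) := by
          congr 1
          have hb := add_pow ((10^13:ℝ)/(m:ℝ)) 1 (k-1)
          have hk1 : k - 1 + 1 = k := by omega
          rw [hk1] at hb
          rw [add_comm (1:ℝ) (10^13/((m:ℕ):ℝ))]
          rw [hb]
          apply Finset.sum_congr rfl
          intro i _
          rw [one_pow, mul_one]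
          ring

def bset {n : ℕ} (π : Equiv.Perm (Fin n)) : Finset ℕ :=
  (Finset.Icc 1 n).filter fun s => ∀ i : Fin n, (i : ℕ) < s → (π i : ℕ) < s

lemma numComponents_eq {n : ℕ} (π : Equiv.Perm (Fin n)) :
    numComponents π = (bset π).card := rfl

lemma T_eq_zero (n k : ℕ) (h : n < k) : T n k = 0 := by
  rw [T, Finset.card_eq_zero]
  apply Finset.filter_false_of_mem
  intro π _
  intro hc
  have h1 : (bset π).card ≤ n := by
    calc (bset π).card ≤ (Finset.Icc 1 n).card := Finset.card_filter_le _ _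
      _ = n := by rw [Nat.card_Icc]; omega
  rw [numComponents_eq] at hc
  omega

lemma T_le_factorial (n : ℕ) : T n 1 ≤ n.factorial := by
  calc T n 1 ≤ (Finset.univ : Finset (Equiv.Perm (Fin n))).card := Finset.card_filter_le _ _
    _ = n.factorial := by
      rw [Finset.card_univ, Fintype.card_perm, Fintype.card_fin]

-- the "maps-to implies iff" lemma
lemma maps_iff {n a : ℕ} (π : Equiv.Perm (Fin n))
    (h1 : ∀ i : Fin n, (i:ℕ) < a → ((π i : Fin n):ℕ) < a) :
    ∀ i : Fin n, (i:ℕ) < a ↔ ((π i : Fin n):ℕ) < a := by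
  classical
  set S : Finset (Fin n) := Finset.univ.filter (fun x : Fin n => (x:ℕ) < a) with hS
  have hsub : S.image π ⊆ S := by
    intro y hy
    rw [Finset.mem_image] at hy
    obtain ⟨x, hx, rfl⟩ := hy
    rw [hS, Finset.mem_filter] at hx ⊢
    exact ⟨Finset.mem_univ _, h1 x hx.2⟩
  have hcard : (S.image π).card = S.card := Finset.card_image_of_injective S π.injective
  have heq : S.image π = S := Finset.eq_of_subset_of_card_le hsub (le_of_eq hcard.symm)
  intro i
  constructor
  · exact h1 i
  · intro hπ
    have : π i ∈ S := by
      rw [hS, Finset.mem_filter]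
      exact ⟨Finset.mem_univ _, hπ⟩
    rw [← heq, Finset.mem_image] at this
    obtain ⟨x, hx, hxe⟩ := this
    have : x = i := π.injective hxe
    subst this
    rw [hS, Finset.mem_filter] at hx
    exact hx.2

def eA (n a : ℕ) (han : a ≤ n) : {x : Fin n // (x:ℕ) < a} ≃ Fin a where
  toFun x := ⟨x.1.1, x.2⟩
  invFun i := ⟨⟨i.1, lt_of_lt_of_le i.2 han⟩, i.2⟩
  left_inv x := Subtype.ext (Fin.ext rfl)
  right_inv i := rfl

def eB (n a b : ℕ) (hab : a + b = n) : {x : Fin n // ¬((x:ℕ) < a)} ≃ Fin b where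
  toFun x := ⟨x.1.1 - a, by have h2 := x.1.2; have h3 := x.2; omega⟩
  invFun j := ⟨⟨a + j.1, by have := j.2; omega⟩, by show ¬ (a + j.1 < a); omega⟩
  left_inv x := Subtype.ext (Fin.ext (by show a + (x.1.1 - a) = x.1.1; have h3 := x.2; omega))
  right_inv j := Fin.ext (by show a + j.1 - a = j.1; omega)

def splitPerm (n a b : ℕ) (hab : a + b = n) (π : Equiv.Perm (Fin n)) :
    Equiv.Perm (Fin a) × Equiv.Perm (Fin b) :=
  if h : ∀ i : Fin n, (i:ℕ) < a ↔ ((π i : Fin n):ℕ) < a then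
    ((eA n a (by omega)).permCongr (π.subtypePerm (fun x => (h x).symm)),
     (eB n a b hab).permCongr (π.subtypePerm (fun x => not_congr (h x).symm)))
  else (1, 1)

lemma splitPerm_fst_apply (n a b : ℕ) (hab : a + b = n) (π : Equiv.Perm (Fin n))
    (h : ∀ i : Fin n, (i:ℕ) < a ↔ ((π i : Fin n):ℕ) < a) (i : Fin a) (hi : (i:ℕ) < n) :
    (((splitPerm n a b hab π).1 i : Fin a) : ℕ) = ((π ⟨i.1, hi⟩ : Fin n) : ℕ) := by
  rw [splitPerm, dif_pos h]
  rfl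

lemma splitPerm_snd_apply (n a b : ℕ) (hab : a + b = n) (π : Equiv.Perm (Fin n))
    (h : ∀ i : Fin n, (i:ℕ) < a ↔ ((π i : Fin n):ℕ) < a) (j : Fin b) (hj : a + j.1 < n) :
    (((splitPerm n a b hab π).2 j : Fin b) : ℕ) = ((π ⟨a + j.1, hj⟩ : Fin n) : ℕ) - a := by
  rw [splitPerm, dif_pos h]
  rfl

lemma ge_of_lt_iff {n a : ℕ} (π : Equiv.Perm (Fin n))
    (h : ∀ i : Fin n, (i:ℕ) < a ↔ ((π i : Fin n):ℕ) < a) :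
    ∀ i : Fin n, a ≤ (i:ℕ) → a ≤ ((π i : Fin n):ℕ) := by
  intro i hi
  by_contra hc
  push_neg at hc
  have := (h i).2 hc
  omega

lemma bset_eq_insert (n a b k : ℕ) (hab : a + b = n) (ha1 : 1 ≤ a)
    (π : Equiv.Perm (Fin n))
    (hmema : a ∈ bset π) (hmin : ∀ s ∈ bset π, a ≤ s)
    (h : ∀ i : Fin n, (i:ℕ) < a ↔ ((π i : Fin n):ℕ) < a) :
    bset π = insert a ((bset ((splitPerm n a b hab π).2)).image (fun s => a + s)) := by
  have hgea := ge_of_lt_iff π h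
  set τ := (splitPerm n a b hab π).2 with hτ
  ext s
  simp only [Finset.mem_insert, Finset.mem_image]
  constructor
  · intro hs
    have has : a ≤ s := hmin s hs
    rw [bset, Finset.mem_filter, Finset.mem_Icc] at hs
    obtain ⟨⟨hs1, hs2⟩, hcond⟩ := hs
    rcases eq_or_lt_of_le has with he | hlt
    · left; omega
    · right
      refine ⟨s - a, ?_, by omega⟩
      rw [bset, Finset.mem_filter, Finset.mem_Icc]
      refine ⟨⟨by omega, by omega⟩, ?_⟩
      intro j hj
      have hjn : a + j.1 < n := by have := j.2; omega
      have hv := splitPerm_snd_apply n a b hab π h j hjn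
      rw [← hτ] at hv
      rw [hv]
      have hπlt : ((π ⟨a + j.1, hjn⟩ : Fin n):ℕ) < s := hcond ⟨a + j.1, hjn⟩ (by
        show a + j.1 < s
        omega)
      have hπge : a ≤ ((π ⟨a + j.1, hjn⟩ : Fin n):ℕ) := hgea _ (by show a ≤ a + j.1; omega)
      omega
  · intro hs
    rcases hs with he | ⟨s', hs', hse⟩
    · subst he; exact hmema
    · subst hse
      rw [bset, Finset.mem_filter, Finset.mem_Icc] at hs' ⊢
      obtain ⟨⟨h1', h2'⟩, hcond'⟩ := hs'
      refine ⟨⟨by omega, by omega⟩, ?_⟩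
      intro i hi
      rcases lt_or_ge (i:ℕ) a with hia | hia
      · have := (h i).1 hia
        omega
      · have hjb : (i:ℕ) - a < b := by have := i.2; omega
        have hjs : (i:ℕ) - a < s' := by omega
        have hjn : a + ((i:ℕ) - a) < n := by have := i.2; omega
        have hv := splitPerm_snd_apply n a b hab π h ⟨(i:ℕ) - a, hjb⟩ hjn
        rw [← hτ] at hv
        have hτlt := hcond' ⟨(i:ℕ) - a, hjb⟩ hjs
        rw [hv] at hτlt
        have hieq : (⟨a + ((i:ℕ) - a), hjn⟩ : Fin n) = i := Fin.ext (by
          show a + ((i:ℕ) - a) = (i:ℕ)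
          omega)
        rw [hieq] at hτlt
        have hπge : a ≤ ((π i : Fin n):ℕ) := hgea i (by omega)
        omega

lemma card_Pa_le (n k a : ℕ) (ha1 : 1 ≤ a) (ha2 : a < n) :
    (Finset.univ.filter (fun π : Equiv.Perm (Fin n) =>
      numComponents π = k ∧ a ∈ bset π ∧ ∀ s ∈ bset π, a ≤ s)).card ≤
    a.factorial * T (n-a) (k-1) := by
  classical
  set b := n - a with hb
  have hab : a + b = n := by omega
  have htarget : a.factorial * T (n-a) (k-1) =
      ((Finset.univ : Finset (Equiv.Perm (Fin a))) ×ˢ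
        (Finset.univ.filter (fun τ : Equiv.Perm (Fin b) => numComponents τ = k-1))).card := by
    rw [Finset.card_product, Finset.card_univ, Fintype.card_perm, Fintype.card_fin, T, ← hb]
  rw [htarget]
  apply Finset.card_le_card_of_injOn (fun π => splitPerm n a b hab π)
  · -- maps to
    intro π hπ
    rw [Finset.mem_coe, Finset.mem_filter] at hπ
    obtain ⟨-, hcomp, hmema, hmin⟩ := hπ
    have h1 : ∀ i : Fin n, (i:ℕ) < a → ((π i : Fin n):ℕ) < a := by
      rw [bset, Finset.mem_filter] at hmema
      exact hmema.2
    have h := maps_iff π h1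
    rw [Finset.mem_coe, Finset.mem_product]
    refine ⟨Finset.mem_univ _, ?_⟩
    rw [Finset.mem_filter]
    refine ⟨Finset.mem_univ _, ?_⟩
    have hins := bset_eq_insert n a b k hab ha1 π hmema hmin h
    have hanotin : a ∉ (bset ((splitPerm n a b hab π).2)).image (fun s => a + s) := by
      rw [Finset.mem_image]
      rintro ⟨s', hs', hse⟩
      rw [bset, Finset.mem_filter, Finset.mem_Icc] at hs'
      omega
    have hcard : (bset π).card =
        ((bset ((splitPerm n a b hab π).2)).image (fun s => a + s)).card + 1 := by
      rw [hins, Finset.card_insert_of_notMem hanotin]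
    have himg : ((bset ((splitPerm n a b hab π).2)).image (fun s => a + s)).card =
        (bset ((splitPerm n a b hab π).2)).card :=
      Finset.card_image_of_injective _ (add_right_injective a)
    rw [numComponents_eq] at hcomp ⊢
    beta_reduce
    omega
  · -- injective
    intro π hπ π' hπ' heq
    simp only [Finset.coe_filter, Set.mem_setOf_eq] at hπ hπ'
    obtain ⟨-, -, hmema, -⟩ := hπ
    obtain ⟨-, -, hmema', -⟩ := hπ'
    have h1 : ∀ i : Fin n, (i:ℕ) < a → ((π i : Fin n):ℕ) < a := by
      rw [bset, Finset.mem_filter] at hmema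
      exact hmema.2
    have h1' : ∀ i : Fin n, (i:ℕ) < a → ((π' i : Fin n):ℕ) < a := by
      rw [bset, Finset.mem_filter] at hmema'
      exact hmema'.2
    have h := maps_iff π h1
    have h' := maps_iff π' h1'
    have hgea := ge_of_lt_iff π h
    have hgea' := ge_of_lt_iff π' h'
    apply Equiv.ext
    intro i
    rcases lt_or_ge (i:ℕ) a with hia | hia
    · have hv := splitPerm_fst_apply n a b hab π h ⟨(i:ℕ), hia⟩ i.2
      have hv' := splitPerm_fst_apply n a b hab π' h' ⟨(i:ℕ), hia⟩ i.2
      have hie : (⟨(i:ℕ), i.2⟩ : Fin n) = i := Fin.ext rfl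
      rw [hie] at hv hv'
      have heqq : splitPerm n a b hab π = splitPerm n a b hab π' := heq
      have : (((splitPerm n a b hab π).1 ⟨(i:ℕ), hia⟩ : Fin a) : ℕ) =
          (((splitPerm n a b hab π').1 ⟨(i:ℕ), hia⟩ : Fin a) : ℕ) := by rw [heqq]
      rw [hv, hv'] at this
      exact Fin.ext this
    · have hjb : (i:ℕ) - a < b := by have := i.2; omega
      have hjn : a + ((i:ℕ) - a) < n := by have := i.2; omega
      have hv := splitPerm_snd_apply n a b hab π h ⟨(i:ℕ) - a, hjb⟩ hjn
      have hv' := splitPerm_snd_apply n a b hab π' h' ⟨(i:ℕ) - a, hjb⟩ hjn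
      have hie : (⟨a + ((i:ℕ) - a), hjn⟩ : Fin n) = i := Fin.ext (by
        show a + ((i:ℕ) - a) = (i:ℕ); omega)
      rw [hie] at hv hv'
      have heqq : splitPerm n a b hab π = splitPerm n a b hab π' := heq
      have heq2 : (((splitPerm n a b hab π).2 ⟨(i:ℕ) - a, hjb⟩ : Fin b) : ℕ) =
          (((splitPerm n a b hab π').2 ⟨(i:ℕ) - a, hjb⟩ : Fin b) : ℕ) := by rw [heqq]
      rw [hv, hv'] at heq2
      have g1 := hgea i hia
      have g1' := hgea' i hia
      exact Fin.ext (by omega)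

lemma T_rec (n k : ℕ) (hk : 2 ≤ k) :
    T n k ≤ ∑ a ∈ Finset.Icc 1 (n-1), a.factorial * T (n-a) (k-1) := by
  classical
  have hsub : Finset.univ.filter (fun π : Equiv.Perm (Fin n) => numComponents π = k) ⊆
      (Finset.Icc 1 (n-1)).biUnion (fun a => Finset.univ.filter
        (fun π : Equiv.Perm (Fin n) =>
          numComponents π = k ∧ a ∈ bset π ∧ ∀ s ∈ bset π, a ≤ s)) := by
    intro π hπ
    rw [Finset.mem_filter] at hπ
    obtain ⟨-, hcomp⟩ := hπ
    have hcard : (bset π).card = k := by rw [← numComponents_eq]; exact hcomp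
    have hne : (bset π).Nonempty := by
      rw [← Finset.card_pos, hcard]; omega
    set a := (bset π).min' hne with ha
    have hamem : a ∈ bset π := Finset.min'_mem _ _
    have hmin : ∀ s ∈ bset π, a ≤ s := fun s hs => Finset.min'_le _ s hs
    have haI : a ∈ Finset.Icc 1 n := by
      rw [bset, Finset.mem_filter] at hamem
      exact hamem.1
    rw [Finset.mem_Icc] at haI
    have hlt : a < (bset π).max' hne := by
      apply Finset.min'_lt_max'_of_card
      omega
    have hmaxmem := Finset.max'_mem (bset π) hne
    have hmaxle : (bset π).max' hne ≤ n := by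
      have h9 := hmaxmem
      simp only [bset, Finset.mem_filter, Finset.mem_Icc] at h9
      exact h9.1.2
    rw [Finset.mem_biUnion]
    refine ⟨a, ?_, ?_⟩
    · rw [Finset.mem_Icc]
      omega
    · rw [Finset.mem_filter]
      exact ⟨Finset.mem_univ _, hcomp, hamem, hmin⟩
  calc T n k ≤ ((Finset.Icc 1 (n-1)).biUnion (fun a => Finset.univ.filter
        (fun π : Equiv.Perm (Fin n) =>
          numComponents π = k ∧ a ∈ bset π ∧ ∀ s ∈ bset π, a ≤ s))).card :=
        Finset.card_le_card hsub
    _ ≤ ∑ a ∈ Finset.Icc 1 (n-1), (Finset.univ.filter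
        (fun π : Equiv.Perm (Fin n) =>
          numComponents π = k ∧ a ∈ bset π ∧ ∀ s ∈ bset π, a ≤ s)).card :=
        Finset.card_biUnion_le
    _ ≤ ∑ a ∈ Finset.Icc 1 (n-1), a.factorial * T (n-a) (k-1) := by
        apply Finset.sum_le_sum
        intro a ha
        rw [Finset.mem_Icc] at ha
        exact card_Pa_le n k a (by omega) (by omega)

lemma T_le_W : ∀ k, 1 ≤ k → ∀ n, T n k ≤ W n k := by
  intro k hk
  induction k, hk using Nat.le_induction with
  | base =>
    intro n
    rcases Nat.eq_zero_or_pos n with hn | hn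
    · subst hn
      rw [T_eq_zero 0 1 (by omega)]
      omega
    · rcases eq_or_lt_of_le (show 1 ≤ n from hn) with hn1 | hn2
      · -- n = 1
        have hW : 1 ≤ W 1 1 := by
          rw [W]
          have : (1:ℕ) - 1 = 0 := rfl
          rw [this]
          rw [Finset.sum_range_succ']
          simp [Vc]
        have hT : T 1 1 ≤ 1 := by
          calc T 1 1 ≤ Nat.factorial 1 := T_le_factorial 1
            _ = 1 := rfl
        have e : n = 1 := by omega
        subst e
        calc T 1 1 ≤ 1 := hT
          _ ≤ W 1 1 := hW
      · -- n ≥ 2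
        have hV : n.factorial ≤ Vc 1 (n-1) := by
          rw [Vc]
          have hmem : (n-1) ∈ Finset.Icc 1 (n-1) := by
            rw [Finset.mem_Icc]
            omega
          calc n.factorial = ((n-1)+1).factorial * Vc 0 ((n-1) - (n-1)) := by
                have e1 : (n-1)+1 = n := by omega
                have e2 : (n-1)-(n-1) = 0 := by omega
                rw [e1, e2]
                simp [Vc]
            _ ≤ ∑ c ∈ Finset.Icc 1 (n-1), (c+1).factorial * Vc 0 ((n-1) - c) := by
                apply Finset.single_le_sum (f := fun c => (c+1).factorial * Vc 0 ((n-1) - c))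
                  (fun c _ => Nat.zero_le _) hmem
        have hW : n.factorial ≤ W n 1 := by
          rw [W]
          calc n.factorial ≤ Vc 1 (n-1) := hV
            _ ≤ ∑ j ∈ Finset.range 2, Nat.choose 1 j * Vc j (n-1) := by
                rw [Finset.sum_range_succ, Finset.sum_range_one]
                simp
        calc T n 1 ≤ n.factorial := T_le_factorial n
          _ ≤ W n 1 := hW
  | succ k hk ih =>
    intro n
    rcases lt_or_ge n (k+1) with hn | hn
    · rw [T_eq_zero n (k+1) hn]
      omega
    · calc T n (k+1) ≤ ∑ a ∈ Finset.Icc 1 (n-1), a.factorial * T (n-a) ((k+1)-1) :=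
            T_rec n (k+1) (by omega)
        _ ≤ ∑ a ∈ Finset.Icc 1 (n-1),
            (if a ≤ n - k then a.factorial * W (n-a) k else 0) := by
            apply Finset.sum_le_sum
            intro a ha
            rw [Finset.mem_Icc] at ha
            have e1 : (k+1) - 1 = k := by omega
            rw [e1]
            split_ifs with hcase
            · exact Nat.mul_le_mul_left _ (ih (n-a))
            · rw [T_eq_zero (n-a) k (by omega)]
              simp
        _ = ∑ a ∈ Finset.Icc 1 (n-k), a.factorial * W (n-a) k := by
            rw [← Finset.sum_filter]
            congr 1
            ext a
            simp only [Finset.mem_filter, Finset.mem_Icc]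
            omega
        _ = W n (k+1) := W_rec k n (by omega)

theorem stmt7 : ∃ c : ℝ, 0 < c ∧ ∀ n k : ℕ, 1 ≤ k → k ≤ n →
    (T n k : ℝ) ≤ k * Nat.factorial (n - k + 1) * Real.exp (c * (k - 1) / (n - k + 1)) := by
  refine ⟨10^13, by norm_num, ?_⟩
  intro n k hk hkn
  set m : ℕ := n - k + 1 with hm
  have hm1 : 1 ≤ m := by omega
  have hmpos : (0:ℝ) < (m:ℝ) := by
    have : (1:ℝ) ≤ (m:ℝ) := by exact_mod_cast hm1
    linarith
  have h1 : (T n k : ℝ) ≤ (W n k : ℝ) := by exact_mod_cast T_le_W k hk n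
  have h2 := W_le n k hk hkn
  have h3 : (1 + 10^13/(m:ℝ)) ≤ Real.exp (10^13/(m:ℝ)) := by
    have := Real.add_one_le_exp ((10:ℝ)^13/(m:ℝ))
    linarith
  have h4 : (1 + 10^13/(m:ℝ))^(k-1) ≤ Real.exp ((10:ℝ)^13/(m:ℝ))^(k-1) := by
    apply pow_le_pow_left₀ (by positivity) h3
  have hmcast : (m:ℝ) = (n:ℝ) - k + 1 := by
    rw [hm]
    push_cast [Nat.cast_sub hkn]
    ring
  have hkcast : ((k-1:ℕ):ℝ) = (k:ℝ) - 1 := by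
    push_cast [Nat.cast_sub hk]
    ring
  have h5 : Real.exp ((10:ℝ)^13/(m:ℝ))^(k-1) =
      Real.exp ((10:ℝ)^13 * ((k:ℝ) - 1) / ((n:ℝ) - k + 1)) := by
    rw [← Real.exp_nat_mul]
    congr 1
    rw [hkcast, ← hmcast]
    field_simp
  have hnonneg : (0:ℝ) ≤ (k:ℝ) * ((m.factorial : ℕ):ℝ) := by positivity
  calc (T n k : ℝ) ≤ (W n k : ℝ) := h1
    _ ≤ (k:ℝ) * ((m.factorial : ℕ):ℝ) * (1 + 10^13/((m:ℕ):ℝ))^(k-1) := h2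
    _ ≤ (k:ℝ) * ((m.factorial : ℕ):ℝ) * Real.exp ((10:ℝ)^13 * ((k:ℝ) - 1) / ((n:ℝ) - k + 1)) := by
        rw [← h5]
        exact mul_le_mul_of_nonneg_left h4 hnonneg
end

section
/- For every fixed nonnegative integer l there exists a constant C_l > 0 such that T(n, n-l) ≤ C_l * n^l for all n ≥ 1. -/
open Finset

/-- The set of prefix-closed boundaries of `π`. -/
def Bset {n : ℕ} (π : Equiv.Perm (Fin n)) : Finset ℕ :=
  (Finset.Icc 1 n).filter fun s => ∀ i : Fin n, (i : ℕ) < s → (π i : ℕ) < s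

lemma fix_lemma {n : ℕ} (π : Equiv.Perm (Fin n)) (i : Fin n)
    (h1 : ∀ j : Fin n, (j : ℕ) < (i : ℕ) → (π j : ℕ) < (i : ℕ))
    (h2 : ∀ j : Fin n, (j : ℕ) < (i : ℕ) + 1 → (π j : ℕ) < (i : ℕ) + 1) :
    π i = i := by
  have hle : (π i : ℕ) ≤ (i : ℕ) := Nat.lt_succ_iff.mp (h2 i (Nat.lt_succ_self _))
  rcases lt_or_eq_of_le hle with hlt | heq
  · exfalso
    set A : Finset (Fin n) := Finset.univ.filter fun j => (j : ℕ) < (i : ℕ) with hA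
    have hsub : A.image π ⊆ A := by
      intro x hx
      simp only [Finset.mem_image] at hx
      obtain ⟨j, hj, rfl⟩ := hx
      simp only [hA, Finset.mem_filter, Finset.mem_univ, true_and] at hj ⊢
      exact h1 j hj
    have hcard : A.card ≤ (A.image π).card := by
      rw [Finset.card_image_of_injective _ π.injective]
    have heqset : A.image π = A := Finset.eq_of_subset_of_card_le hsub hcard
    have hmem : π i ∈ A := by
      simp only [hA, Finset.mem_filter, Finset.mem_univ, true_and]
      exact hlt
    rw [← heqset, Finset.mem_image] at hmem
    obtain ⟨j, hj, hje⟩ := hmem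
    have : j = i := π.injective hje
    subst this
    simp only [hA, Finset.mem_filter, Finset.mem_univ, true_and] at hj
    exact lt_irrefl _ hj
  · exact Fin.ext heq

/-- Permutations with a given "non-boundary set" `M` fix everything away from `M`. -/
lemma mem_fixes {n l : ℕ} (π : Equiv.Perm (Fin n)) (M : Finset ℕ)
    (hM : Finset.Icc 1 n \ Bset π = M) (i : Fin n)
    (hi : (i : ℕ) ∉ M) (hi1 : (i : ℕ) + 1 ∉ M) : π i = i := by
  have hmem : ∀ s : ℕ, 1 ≤ s → s ≤ n → s ∉ M →
      ∀ j : Fin n, (j : ℕ) < s → (π j : ℕ) < s := by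
    intro s h1s hsn hsM
    have : s ∈ Bset π := by
      by_contra h
      exact hsM (hM ▸ Finset.mem_sdiff.mpr ⟨Finset.mem_Icc.mpr ⟨h1s, hsn⟩, h⟩)
    rw [Bset, Finset.mem_filter] at this
    exact this.2
  apply fix_lemma π i
  · rcases Nat.eq_zero_or_pos (i : ℕ) with h0 | hpos
    · intro j hj; omega
    · exact hmem _ hpos (le_of_lt i.isLt) hi
  · have hin : (i : ℕ) < n := i.isLt
    exact hmem ((i : ℕ) + 1) (by omega) (by omega) hi1

/-- Bound on the number of permutations fixing everything outside a set `U`. -/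
lemma card_fixing_le {n : ℕ} (U : Finset (Fin n)) :
    ((Finset.univ : Finset (Equiv.Perm (Fin n))).filter
      fun π => ∀ i : Fin n, i ∉ U → π i = i).card ≤ U.card.factorial := by
  classical
  have : ((Finset.univ : Finset (Equiv.Perm (Fin n))).filter
      fun π => ∀ i : Fin n, i ∉ U → π i = i).card
      ≤ (Finset.univ : Finset (Equiv.Perm {x : Fin n // x ∈ U})).card := by
    have key : ∀ π : Equiv.Perm (Fin n), (∀ i : Fin n, i ∉ U → π i = i) →
        ∀ x : Fin n, x ∈ U ↔ π x ∈ U := by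
      intro π hπ x
      constructor
      · intro hx
        by_contra hpx
        have h1 : π (π x) = π x := hπ _ hpx
        have h2 : π x = x := π.injective h1
        rw [h2] at hpx
        exact hpx hx
      · intro hpx
        by_contra hx
        have h1 : π x = x := hπ _ hx
        rw [h1] at hpx
        exact hx hpx
    apply Finset.card_le_card_of_injOn
      (fun π => if h : ∀ i : Fin n, i ∉ U → π i = i then
        Equiv.Perm.subtypePerm π (fun x => (key π h x).symm) else 1)
    · intro π _; exact Finset.mem_univ _
    · intro π hπ ρ hρ h
      simp only [Finset.mem_coe, Finset.mem_filter, Finset.mem_univ, true_and] at hπ hρ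
      simp only [dif_pos hπ, dif_pos hρ] at h
      ext x
      by_cases hx : x ∈ U
      · have := congrArg (fun f => ((f : Equiv.Perm {x : Fin n // x ∈ U}) ⟨x, hx⟩ : {x : Fin n // x ∈ U})) h
        simp only [Equiv.Perm.subtypePerm_apply] at this
        have h2 : π x = ρ x := Subtype.ext_iff.mp this
        rw [h2]
      · rw [hπ x hx, hρ x hx]
  calc ((Finset.univ : Finset (Equiv.Perm (Fin n))).filter
      fun π => ∀ i : Fin n, i ∉ U → π i = i).card
      ≤ (Finset.univ : Finset (Equiv.Perm {x : Fin n // x ∈ U})).card := this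
    _ = U.card.factorial := by
        rw [Finset.card_univ, Fintype.card_perm, Fintype.card_coe]

lemma fiber_bound {n l : ℕ} (M : Finset ℕ) (hMc : M.card = l) :
    (((Finset.univ : Finset (Equiv.Perm (Fin n))).filter
        fun π => numComponents π = n - l).filter
      fun π => Finset.Icc 1 n \ Bset π = M).card ≤ (2 * l).factorial := by
  classical
  set U : Finset (Fin n) := Finset.univ.filter
    fun i : Fin n => (i : ℕ) ∈ M ∨ (i : ℕ) + 1 ∈ M with hU
  have hsub : (((Finset.univ : Finset (Equiv.Perm (Fin n))).filter
        fun π => numComponents π = n - l).filter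
      fun π => Finset.Icc 1 n \ Bset π = M)
      ⊆ (Finset.univ.filter fun π => ∀ i : Fin n, i ∉ U → π i = i) := by
    intro π hπ
    simp only [Finset.mem_filter, Finset.mem_univ, true_and] at hπ ⊢
    intro i hiU
    simp only [hU, Finset.mem_filter, Finset.mem_univ, true_and, not_or] at hiU
    exact mem_fixes (l := l) π M hπ.2 i hiU.1 hiU.2
  have hUcard : U.card ≤ 2 * l := by
    have h1 : (Finset.univ.filter fun i : Fin n => (i : ℕ) ∈ M).card ≤ M.card :=
      Finset.card_le_card_of_injOn (fun i => (i : ℕ))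
        (fun i hi => by simpa using hi) (fun a _ b _ h => Fin.ext h)
    have h2 : (Finset.univ.filter fun i : Fin n => (i : ℕ) + 1 ∈ M).card ≤ M.card :=
      Finset.card_le_card_of_injOn (fun i => (i : ℕ) + 1)
        (fun i hi => by simpa using hi)
        (fun a _ b _ h => Fin.ext (Nat.succ_injective h))
    have hsplit : U ⊆ (Finset.univ.filter fun i : Fin n => (i : ℕ) ∈ M)
        ∪ (Finset.univ.filter fun i : Fin n => (i : ℕ) + 1 ∈ M) := by
      intro i hi
      simp only [hU, Finset.mem_filter, Finset.mem_univ, true_and] at hi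
      simp only [Finset.mem_union, Finset.mem_filter, Finset.mem_univ, true_and]
      exact hi
    calc U.card ≤ _ := Finset.card_le_card hsplit
      _ ≤ _ + _ := Finset.card_union_le _ _
      _ ≤ M.card + M.card := Nat.add_le_add h1 h2
      _ = 2 * l := by rw [hMc]; ring
  calc _ ≤ (Finset.univ.filter fun π : Equiv.Perm (Fin n) =>
        ∀ i : Fin n, i ∉ U → π i = i).card := Finset.card_le_card hsub
    _ ≤ U.card.factorial := card_fixing_le U
    _ ≤ (2 * l).factorial := Nat.factorial_le hUcard

lemma T_nat_bound (l n : ℕ) (hn : 1 ≤ n) :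
    T n (n - l) ≤ (2 * l).factorial * n ^ l := by
  classical
  rcases le_or_gt n l with hln | hln
  · -- then n - l = 0 and T n 0 = 0
    have h0 : n - l = 0 := Nat.sub_eq_zero_of_le hln
    rw [h0]
    have : T n 0 = 0 := by
      rw [T, Finset.card_eq_zero]
      apply Finset.filter_false_of_mem
      intro π _
      have hmem : n ∈ Bset π := by
        simp only [Bset, Finset.mem_filter, Finset.mem_Icc]
        exact ⟨⟨hn, le_refl n⟩, fun i _ => (π i).isLt⟩
      intro h
      have : (Bset π).card = 0 := h
      rw [Finset.card_eq_zero] at this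
      rw [this] at hmem
      exact absurd hmem (Finset.notMem_empty n)
    rw [this]
    exact Nat.zero_le _
  · -- l < n
    have hBcard : ∀ π : Equiv.Perm (Fin n), numComponents π = n - l →
        Finset.Icc 1 n \ Bset π ∈ (Finset.Icc 1 n).powersetCard l := by
      intro π hπ
      rw [Finset.mem_powersetCard]
      refine ⟨Finset.sdiff_subset, ?_⟩
      have hsubB : Bset π ⊆ Finset.Icc 1 n := Finset.filter_subset _ _
      rw [Finset.card_sdiff_of_subset hsubB]
      have : (Bset π).card = n - l := hπ
      rw [this, Nat.card_Icc]
      omega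
    have hfib : T n (n - l) = ∑ M ∈ (Finset.Icc 1 n).powersetCard l,
        (((Finset.univ : Finset (Equiv.Perm (Fin n))).filter
            fun π => numComponents π = n - l).filter
          fun π => Finset.Icc 1 n \ Bset π = M).card := by
      rw [T]
      apply Finset.card_eq_sum_card_fiberwise
      intro π hπ
      simp only [Finset.mem_coe, Finset.mem_filter, Finset.mem_univ, true_and] at hπ
      exact hBcard π hπ
    rw [hfib]
    calc ∑ M ∈ (Finset.Icc 1 n).powersetCard l,
        (((Finset.univ : Finset (Equiv.Perm (Fin n))).filter
            fun π => numComponents π = n - l).filter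
          fun π => Finset.Icc 1 n \ Bset π = M).card
        ≤ ∑ M ∈ (Finset.Icc 1 n).powersetCard l, (2 * l).factorial := by
          apply Finset.sum_le_sum
          intro M hM
          rw [Finset.mem_powersetCard] at hM
          exact fiber_bound M hM.2
      _ = ((Finset.Icc 1 n).powersetCard l).card * (2 * l).factorial := by
          rw [Finset.sum_const, smul_eq_mul]
      _ = (Nat.choose n l) * (2 * l).factorial := by
          rw [Finset.card_powersetCard, Nat.card_Icc]
          norm_num
      _ ≤ n ^ l * (2 * l).factorial :=
          Nat.mul_le_mul_right _ (Nat.choose_le_pow n l)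
      _ = (2 * l).factorial * n ^ l := Nat.mul_comm _ _

theorem stmt8 (l : ℕ) : ∃ C : ℝ, 0 < C ∧ ∀ n : ℕ, 1 ≤ n →
    (T n (n - l) : ℝ) ≤ C * (n : ℝ) ^ l := by
  refine ⟨((2 * l).factorial : ℝ), by positivity, fun n hn => ?_⟩
  have key := T_nat_bound l n hn
  calc (T n (n - l) : ℝ) ≤ (((2 * l).factorial * n ^ l : ℕ) : ℝ) := by exact_mod_cast key
    _ = ((2 * l).factorial : ℝ) * (n : ℝ) ^ l := by push_cast; ring
end

section
/- In the house of cards model (where f(all-ones)=1 and all other 2^n - 1 vertices, including the all-zeroes vertex, get i.i.d. Uniform(0,1) fitnesses), the probability that at least one accessible path from all-zeroes to all-ones exists is at most (ln n)/n + 1/n. -/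
open MeasureTheory
open scoped Classical ENNReal

noncomputable section

/-- The vertex reached after `t` steps along the monotone path in the directed `n`-hypercube
encoded by the permutation `π` (coordinate `π s` is flipped from `0` to `1` at step `s+1`). -/
def pathVertex (n : ℕ) (π : Equiv.Perm (Fin n)) (t : ℕ) : Fin n → Bool :=
  fun i => decide ((π.symm i : ℕ) < t)

/-- Product measure on fitness assignments: each vertex of the hypercube independently
receives a Uniform(0,1) value. -/
def hocMeasure (n : ℕ) : Measure ((Fin n → Bool) → ℝ) :=
  Measure.pi fun _ => volume.restrict (Set.Icc (0 : ℝ) 1)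

/-- Fitness function with prescribed values `a` at the all-zeroes vertex and `c` at the
all-ones vertex, and the random value `ω v` elsewhere. -/
def fitness (n : ℕ) (a c : ℝ) (ω : (Fin n → Bool) → ℝ) (v : Fin n → Bool) : ℝ :=
  if v = (fun _ => false) then a else if v = (fun _ => true) then c else ω v

/-- The monotone path `π` is accessible: fitness strictly increases along it. -/
def accessible (n : ℕ) (a c : ℝ) (ω : (Fin n → Bool) → ℝ) (π : Equiv.Perm (Fin n)) : Prop :=
  ∀ t < n, fitness n a c ω (pathVertex n π t) < fitness n a c ω (pathVertex n π (t + 1))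

/-- The number of accessible monotone paths from all-zeroes to all-ones. -/
def numAccessible (n : ℕ) (a c : ℝ) (ω : (Fin n → Bool) → ℝ) : ℕ :=
  (Finset.univ.filter fun π : Equiv.Perm (Fin n) => accessible n a c ω π).card
/-- Fitness in the unconstrained HoC model: the all-ones vertex has fitness 1, every other
vertex (including all-zeroes) has the random fitness `ω v`. -/
def fitnessHoC (n : ℕ) (ω : (Fin n → Bool) → ℝ) (v : Fin n → Bool) : ℝ :=
  if v = (fun _ => true) then 1 else ω v

/-- Accessibility of path `π` in the HoC model. -/
def accessibleHoC (n : ℕ) (ω : (Fin n → Bool) → ℝ) (π : Equiv.Perm (Fin n)) : Prop :=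
  ∀ t < n, fitnessHoC n ω (pathVertex n π t) < fitnessHoC n ω (pathVertex n π (t + 1))


abbrev unif : Measure ℝ := volume.restrict (Set.Icc (0 : ℝ) 1)

instance : IsProbabilityMeasure unif := ⟨by simp [Real.volume_Icc]⟩

lemma mp_reindex {ι : Type*} [Fintype ι] (e : Equiv.Perm ι) :
    MeasurePreserving (fun ω : ι → ℝ => ω ∘ e)
      (Measure.pi fun _ => unif) (Measure.pi fun _ => unif) :=
  measurePreserving_arrowCongr' (fun _ : ι => unif) (fun _ : ι => unif)
    e.symm (MeasurableEquiv.refl ℝ) (fun _ => MeasurePreserving.id _)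

lemma perm_strictMono_eq_one {n : ℕ} (τ : Equiv.Perm (Fin n)) (h : StrictMono τ) : τ = 1 := by
  haveI : WellFoundedLT (Fin n) := Finite.to_wellFoundedLT
  have hsymm : StrictMono τ.symm := by
    intro a b hab
    rcases lt_trichotomy (τ.symm a) (τ.symm b) with h' | h' | h'
    · exact h'
    · exfalso; have := congrArg τ h'; simp at this; omega
    · exfalso; have := h h'; simp at this; omega
  ext i
  have h1 : i ≤ τ i := h.le_apply
  have h2 : τ i ≤ τ.symm (τ i) := hsymm.le_apply
  simp only [Equiv.symm_apply_apply] at h2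
  have := le_antisymm h2 h1
  exact congrArg Fin.val this

lemma perm_of_both_mono {n : ℕ} (σ σ' : Equiv.Perm (Fin n)) (u : Fin n → ℝ)
    (m1 : StrictMono (u ∘ σ)) (m2 : StrictMono (u ∘ σ')) : σ = σ' := by
  have hτ : StrictMono (σ'.symm * σ : Equiv.Perm (Fin n)) := by
    intro s t hst
    have : (u ∘ σ') ((σ'.symm * σ) s) < (u ∘ σ') ((σ'.symm * σ) t) := by
      simpa [Equiv.Perm.mul_apply] using m1 hst
    exact m2.lt_iff_lt.mp this
  have h1 := perm_strictMono_eq_one _ hτ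
  ext t
  have := congrArg (fun e : Equiv.Perm (Fin n) => σ' (e t)) h1
  simp only [Equiv.Perm.mul_apply, Equiv.Perm.one_apply, Equiv.apply_symm_apply] at this
  exact congrArg Fin.val this

section Simplex
variable {ι : Type*} [Fintype ι] {n : ℕ} (g : Fin n → ι) (hg : Function.Injective g) (x : ℝ)

def Tset (σ : Equiv.Perm (Fin n)) : Set (ι → ℝ) :=
  {ω | (∀ s t : Fin n, s < t → ω (g (σ s)) < ω (g (σ t))) ∧ ∀ t, x < ω (g t)}

lemma Tset_meas (σ : Equiv.Perm (Fin n)) : MeasurableSet (Tset g x σ) := by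
  unfold Tset
  rw [Set.setOf_and]
  refine MeasurableSet.inter ?_ ?_
  · rw [Set.setOf_forall]
    refine MeasurableSet.iInter fun s => ?_
    rw [Set.setOf_forall]
    refine MeasurableSet.iInter fun t => ?_
    by_cases h : s < t
    · simp only [h, forall_true_left]
      exact measurableSet_lt (measurable_pi_apply _) (measurable_pi_apply _)
    · simp only [h, false_implies]
      exact MeasurableSet.univ.congr (by ext ω; simp [h])
  · rw [Set.setOf_forall]
    exact MeasurableSet.iInter fun t =>
      measurableSet_lt measurable_const (measurable_pi_apply _)

lemma Tset_disj : (↑(Finset.univ : Finset (Equiv.Perm (Fin n))) : Set (Equiv.Perm (Fin n))).PairwiseDisjoint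
    (Tset g x) := by
  intro σ _ σ' _ hne
  refine Set.disjoint_left.mpr fun ω h1 h2 => hne ?_
  exact perm_of_both_mono σ σ' (fun t => ω (g t))
    (fun s t hst => h1.1 s t hst) (fun s t hst => h2.1 s t hst)

include hg in
lemma Tset_measure_eq (σ : Equiv.Perm (Fin n)) :
    (Measure.pi fun _ : ι => unif) (Tset g x σ)
      = (Measure.pi fun _ : ι => unif) (Tset g x 1) := by
  set f : Fin n ≃ Set.range g := Equiv.ofInjective g hg with hf
  set e : Equiv.Perm ι := σ.extendDomain f with he
  have key : ∀ t, e (g t) = g (σ t) := by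
    intro t
    have hp : g t ∈ Set.range g := Set.mem_range_self t
    rw [he, Equiv.Perm.extendDomain_apply_subtype σ f hp]
    have h2 : f.symm ⟨g t, hp⟩ = t := by
      apply f.injective
      rw [Equiv.apply_symm_apply]
      exact Subtype.ext rfl
    rw [h2]
    rfl
  have hpre : Tset g x σ = (fun ω : ι → ℝ => ω ∘ e) ⁻¹' (Tset g x 1) := by
    ext ω
    simp only [Tset, Set.mem_preimage, Set.mem_setOf_eq, Equiv.Perm.one_apply,
      Function.comp_apply, key]
    constructor
    · rintro ⟨hm, hb⟩
      exact ⟨hm, fun t => hb (σ t)⟩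
    · rintro ⟨hm, hb⟩
      refine ⟨hm, fun t => ?_⟩
      have := hb (σ.symm t)
      simpa using this
  rw [hpre]
  exact (mp_reindex e).measure_preimage (Tset_meas g x 1).nullMeasurableSet

lemma Tset_subset (σ : Equiv.Perm (Fin n)) :
    Tset g x σ ⊆ {ω : ι → ℝ | ∀ t, x < ω (g t)} := fun ω h => h.2

lemma unif_Ioi' {x : ℝ} (h0 : 0 ≤ x) (h1 : x ≤ 1) :
    unif (Set.Ioi x) = ENNReal.ofReal (1 - x) := by
  rw [Measure.restrict_apply measurableSet_Ioi]
  have : Set.Ioi x ∩ Set.Icc 0 1 = Set.Ioc x 1 := by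
    ext y; simp only [Set.mem_inter_iff, Set.mem_Ioi, Set.mem_Icc, Set.mem_Ioc]
    constructor
    · rintro ⟨h, _, h'⟩; exact ⟨h, h'⟩
    · rintro ⟨h, h'⟩; exact ⟨h, by linarith, h'⟩
  rw [this, Real.volume_Ioc]

include hg in
lemma pi_range_coord (h0 : 0 ≤ x) (h1 : x ≤ 1) :
    (Measure.pi fun _ : ι => unif) {ω : ι → ℝ | ∀ t, x < ω (g t)}
      = (ENNReal.ofReal (1 - x)) ^ n := by
  have hset : {ω : ι → ℝ | ∀ t, x < ω (g t)}
      = Set.univ.pi (fun v => if v ∈ Set.range g then Set.Ioi x else Set.univ) := by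
    ext ω
    simp only [Set.mem_setOf_eq, Set.mem_pi, Set.mem_univ, forall_true_left]
    constructor
    · intro h v
      by_cases hv : v ∈ Set.range g
      · obtain ⟨t, rfl⟩ := hv; simp [h t]
      · simp [hv]
    · intro h t
      have := h (g t)
      simpa using this
  rw [hset, Measure.pi_pi]
  have : ∀ v : ι, unif (if v ∈ Set.range g then Set.Ioi x else Set.univ)
      = if v ∈ (Set.range g).toFinset then unif (Set.Ioi x) else 1 := by
    intro v
    simp only [Set.mem_toFinset]
    by_cases hv : v ∈ Set.range g <;> simp [hv, measure_univ]
  simp_rw [this]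
  rw [Finset.prod_ite_mem Finset.univ (Set.range g).toFinset (fun _ => unif (Set.Ioi x)),
    Finset.univ_inter, Finset.prod_const]
  have hcard : (Set.range g).toFinset.card = n := by
    rw [Set.toFinset_range, Finset.card_image_of_injective _ hg, Finset.card_univ,
      Fintype.card_fin]
  rw [hcard, unif_Ioi' h0 h1]

include hg in
lemma simplex_bound (h0 : 0 ≤ x) (h1 : x ≤ 1) :
    (Measure.pi fun _ : ι => unif) (Tset g x 1)
      ≤ ENNReal.ofReal (1 - x) ^ n / (n.factorial : ℝ≥0∞) := by
  set μ := (Measure.pi fun _ : ι => unif) with hμ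
  have hsum : ∑ σ : Equiv.Perm (Fin n), μ (Tset g x σ)
      = μ (⋃ σ ∈ (Finset.univ : Finset (Equiv.Perm (Fin n))), Tset g x σ) :=
    (measure_biUnion_finset (Tset_disj g x) (fun σ _ => Tset_meas g x σ)).symm
  have hle : μ (⋃ σ ∈ (Finset.univ : Finset (Equiv.Perm (Fin n))), Tset g x σ)
      ≤ (ENNReal.ofReal (1 - x)) ^ n := by
    refine (measure_mono ?_).trans_eq (pi_range_coord g hg x h0 h1)
    exact Set.iUnion₂_subset fun σ _ => Tset_subset g x σ
  have hconst : ∑ σ : Equiv.Perm (Fin n), μ (Tset g x σ)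
      = (n.factorial : ℝ≥0∞) * μ (Tset g x 1) := by
    rw [Finset.sum_congr rfl (fun σ _ => Tset_measure_eq g hg x σ), Finset.sum_const,
      Finset.card_univ, Fintype.card_perm, Fintype.card_fin, nsmul_eq_mul]
  rw [ENNReal.le_div_iff_mul_le
    (Or.inl (by exact_mod_cast n.factorial_ne_zero)) (Or.inl (ENNReal.natCast_ne_top _))]
  rw [mul_comm, ← hconst, hsum]
  exact hle
end Simplex

lemma pv_zero (n : ℕ) (π : Equiv.Perm (Fin n)) : pathVertex n π 0 = fun _ => false := by
  funext i; simp [pathVertex]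

lemma pv_ne_top (n : ℕ) (π : Equiv.Perm (Fin n)) {t : ℕ} (ht : t < n) :
    pathVertex n π t ≠ fun _ => true := by
  intro h
  have := congrFun h (π ⟨t, ht⟩)
  simp [pathVertex] at this

lemma pv_inj (n : ℕ) (π : Equiv.Perm (Fin n)) :
    Function.Injective (fun t : Fin n => pathVertex n π (t : ℕ)) := by
  intro s t h
  simp only at h
  have hs := congrFun h (π s)
  have ht := congrFun h (π t)
  simp [pathVertex] at hs ht
  exact le_antisymm ht hs

lemma chain (n : ℕ) (π : Equiv.Perm (Fin n)) (ω : (Fin n → Bool) → ℝ)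
    (hacc : accessibleHoC n ω π) :
    ∀ s t : ℕ, s < t → t < n → ω (pathVertex n π s) < ω (pathVertex n π t) := by
  have hfit : ∀ u : ℕ, u < n → fitnessHoC n ω (pathVertex n π u) = ω (pathVertex n π u) := by
    intro u hu
    simp [fitnessHoC, pv_ne_top n π hu]
  intro s t hst htn
  induction t with
  | zero => omega
  | succ t ih =>
    have step : ω (pathVertex n π t) < ω (pathVertex n π (t + 1)) := by
      have h := hacc t (by omega)
      rwa [hfit t (by omega), hfit (t+1) htn] at h
    rcases Nat.lt_or_ge s t with h | h
    · exact (ih h (by omega)).trans step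
    · have : s = t := by omega
      subst this; exact step

lemma pi_single_coord {ι : Type*} [Fintype ι] (z : ι) (x : ℝ) (h0 : 0 ≤ x) (h1 : x ≤ 1) :
    (Measure.pi fun _ : ι => unif) {ω : ι → ℝ | ω z ≤ x} = ENNReal.ofReal x := by
  have hset : {ω : ι → ℝ | ω z ≤ x}
      = Set.univ.pi (fun v => if v = z then Set.Iic x else Set.univ) := by
    ext ω
    simp only [Set.mem_setOf_eq, Set.mem_pi, Set.mem_univ, forall_true_left]
    constructor
    · intro h v; by_cases hv : v = z <;> simp [hv, h]
    · intro h; have := h z; simpa using this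
  rw [hset, Measure.pi_pi]
  have : ∀ v : ι, unif (if v = z then Set.Iic x else Set.univ)
      = if v = z then unif (Set.Iic x) else 1 := by
    intro v; by_cases hv : v = z <;> simp [hv, measure_univ]
  simp_rw [this]
  rw [Finset.prod_ite_eq' Finset.univ z (fun _ => unif (Set.Iic x))]
  have : unif (Set.Iic x) = ENNReal.ofReal x := by
    rw [Measure.restrict_apply measurableSet_Iic]
    have hI : Set.Iic x ∩ Set.Icc 0 1 = Set.Icc 0 x := by
      ext y; simp only [Set.mem_inter_iff, Set.mem_Iic, Set.mem_Icc]
      constructor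
      · rintro ⟨h, h', _⟩; exact ⟨h', h⟩
      · rintro ⟨h, h'⟩; exact ⟨h', h, by linarith⟩
    rw [hI, Real.volume_Icc]; simp
  simp [this]



/-- In the HoC model, the probability that an accessible path exists is at most
`ln n / n + 1/n`. -/
theorem stmt12 (n : ℕ) (hn : 1 ≤ n) :
    (hocMeasure n {ω | ∃ π : Equiv.Perm (Fin n), accessibleHoC n ω π}).toReal
      ≤ Real.log n / n + 1 / n := by
  have hn0 : (0 : ℝ) < n := by exact_mod_cast hn
  set x : ℝ := Real.log n / n with hxdef
  have hx0 : 0 ≤ x := div_nonneg (Real.log_natCast_nonneg n) hn0.le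
  have hx1 : x ≤ 1 := by
    rw [hxdef, div_le_one hn0]
    have := Real.log_le_sub_one_of_pos hn0
    linarith
  set μ : Measure ((Fin n → Bool) → ℝ) := hocMeasure n with hμ
  set z : Fin n → Bool := fun _ => false with hz
  set g : Equiv.Perm (Fin n) → Fin n → (Fin n → Bool) :=
    fun π t => pathVertex n π (t : ℕ) with hgdef
  have hginj : ∀ π, Function.Injective (g π) := fun π => pv_inj n π
  have hincl : {ω : (Fin n → Bool) → ℝ | ∃ π, accessibleHoC n ω π}
      ⊆ {ω : (Fin n → Bool) → ℝ | ω z ≤ x}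
        ∪ ⋃ π : Equiv.Perm (Fin n), Tset (g π) x 1 := by
    rintro ω ⟨π, hπ⟩
    by_cases hωz : ω z ≤ x
    · exact Or.inl hωz
    · right
      refine Set.mem_iUnion.mpr ⟨π, ⟨?_, ?_⟩⟩
      · intro s t hst
        simp only [Equiv.Perm.one_apply]
        exact chain n π ω hπ s t hst t.isLt
      · intro t
        rcases Nat.eq_zero_or_pos (t : ℕ) with h0 | h0
        · have hgz : g π t = z := by
            rw [hgdef]; simp only [h0]
            rw [pv_zero]
          rw [hgz]; exact lt_of_not_ge hωz
        · have h1 : ω z < ω (g π t) := by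
            have := chain n π ω hπ 0 t h0 t.isLt
            rwa [pv_zero] at this
          exact (lt_of_not_ge hωz).trans h1
  have hA : μ {ω : (Fin n → Bool) → ℝ | ω z ≤ x} = ENNReal.ofReal x :=
    pi_single_coord z x hx0 hx1
  have hB : ∀ π : Equiv.Perm (Fin n),
      μ (Tset (g π) x 1) ≤ ENNReal.ofReal (1 - x) ^ n / (n.factorial : ℝ≥0∞) :=
    fun π => simplex_bound (g π) (hginj π) x hx0 hx1
  have hfac0 : (n.factorial : ℝ≥0∞) ≠ 0 := by exact_mod_cast n.factorial_ne_zero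
  have hfact : (n.factorial : ℝ≥0∞) ≠ ⊤ := ENNReal.natCast_ne_top _
  have hEbound : μ {ω : (Fin n → Bool) → ℝ | ∃ π, accessibleHoC n ω π}
      ≤ ENNReal.ofReal x + ENNReal.ofReal (1 - x) ^ n := by
    calc μ {ω : (Fin n → Bool) → ℝ | ∃ π, accessibleHoC n ω π}
        ≤ μ ({ω : (Fin n → Bool) → ℝ | ω z ≤ x}
            ∪ ⋃ π : Equiv.Perm (Fin n), Tset (g π) x 1) := measure_mono hincl
      _ ≤ μ {ω : (Fin n → Bool) → ℝ | ω z ≤ x}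
            + μ (⋃ π : Equiv.Perm (Fin n), Tset (g π) x 1) := measure_union_le _ _
      _ ≤ ENNReal.ofReal x + ∑' π : Equiv.Perm (Fin n), μ (Tset (g π) x 1) := by
            exact add_le_add hA.le (measure_iUnion_le _)
      _ ≤ ENNReal.ofReal x + ∑' _π : Equiv.Perm (Fin n),
            (ENNReal.ofReal (1 - x) ^ n / (n.factorial : ℝ≥0∞)) :=
            add_le_add (le_refl _) (ENNReal.tsum_le_tsum fun π => hB π)
      _ = ENNReal.ofReal x
            + (n.factorial : ℝ≥0∞) * (ENNReal.ofReal (1 - x) ^ n / (n.factorial : ℝ≥0∞)) := by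
            rw [tsum_fintype, Finset.sum_const, Finset.card_univ, Fintype.card_perm,
              Fintype.card_fin, nsmul_eq_mul]
      _ = ENNReal.ofReal x + ENNReal.ofReal (1 - x) ^ n := by
            rw [ENNReal.mul_div_cancel hfac0 hfact]
  have hpow : (1 - x) ^ n ≤ 1 / (n : ℝ) := by
    have h1e : 1 - x ≤ Real.exp (-x) := by linarith [Real.add_one_le_exp (-x)]
    have h2 : (1 - x) ^ n ≤ Real.exp (-x) ^ n := pow_le_pow_left₀ (by linarith) h1e n
    have h3 : Real.exp (-x) ^ n = Real.exp ((n : ℝ) * (-x)) := (Real.exp_nat_mul _ n).symm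
    have h4 : (n : ℝ) * x = Real.log n := by
      rw [hxdef]; field_simp
    have h5 : Real.exp ((n : ℝ) * (-x)) = 1 / (n : ℝ) := by
      rw [mul_neg, h4, Real.exp_neg, Real.exp_log hn0, one_div]
    rw [h3, h5] at h2
    exact h2
  have hfinal : μ {ω : (Fin n → Bool) → ℝ | ∃ π, accessibleHoC n ω π}
      ≤ ENNReal.ofReal (x + 1 / n) := by
    refine hEbound.trans ?_
    rw [← ENNReal.ofReal_pow (by linarith : (0:ℝ) ≤ 1 - x)]
    rw [← ENNReal.ofReal_add hx0 (pow_nonneg (by linarith) n : (0:ℝ) ≤ (1 - x) ^ n)]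
    exact ENNReal.ofReal_le_ofReal (by linarith)
  have := ENNReal.toReal_mono ENNReal.ofReal_ne_top hfinal
  rw [ENNReal.toReal_ofReal (add_nonneg hx0 (by positivity))] at this
  exact this
end
end
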